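/- arXiv:2508.17141 — 8 statements merged into one kernel-verified Lean document; each statement's English description precedes it below -/
import Mathlib

section
/- For every prime power q with q ≡ 3 (mod 8), there exists a symmetric Hadamard matrix of order q(1+q); that is, there exists a matrix H of size q(1+q) × q(1+q) with integer entries, all equal to 1 or −1, such that H is symmetric (Hᵀ = H) and H · Hᵀ = q(1+q) · I. -/
open Finset

namespace SymmHadamardAux

variable {F : Type} [Field F] [Fintype F] [DecidableEq F]

lemma hchar (hF : Fintype.card F % 4 = 3) : ringChar F ≠ 2 := by
  intro h
  have h2 : Fintype.card F % 2 = 0 :=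
    FiniteField.even_card_of_char_two h
  omega

lemma chi_neg_one (hF : Fintype.card F % 4 = 3) : quadraticChar F (-1) = -1 := by
  rw [quadraticChar_neg_one (hchar hF), ZMod.χ₄_nat_eq_if_mod_four]
  rw [if_neg (by omega), if_neg (by omega)]

lemma chi_odd (hF : Fintype.card F % 4 = 3) (x : F) :
    quadraticChar F (-x) = - quadraticChar F x := by
  rw [show (-x) = -1 * x by ring, map_mul, chi_neg_one hF, neg_one_mul]

lemma jacobsthal (hF : Fintype.card F % 4 = 3) {b : F} (hb : b ≠ 0) :
    ∑ a : F, quadraticChar F a * quadraticChar F (a + b) = -1 := by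
  have key : ∀ a : F, a ≠ 0 →
      quadraticChar F a * quadraticChar F (a + b) = quadraticChar F (1 + b * a⁻¹) := by
    intro a ha
    rw [← map_mul, show a * (a + b) = a ^ 2 * (1 + b * a⁻¹) by field_simp,
      map_mul, quadraticChar_sq_one' ha, one_mul]
  have h0 : ∑ a : F, quadraticChar F a * quadraticChar F (a + b)
      = ∑ a ∈ (univ \ {0} : Finset F), quadraticChar F (1 + b * a⁻¹) := by
    rw [← Finset.sum_subset (Finset.subset_univ (univ \ {0}))]
    · exact Finset.sum_congr rfl fun a ha => key a (by simpa using ha)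
    · intro a _ ha
      have : a = 0 := by simpa using ha
      simp [this]
  rw [h0]
  have h1 : ∑ a ∈ (univ \ {0} : Finset F), quadraticChar F (1 + b * a⁻¹)
      = ∑ c ∈ (univ \ {1} : Finset F), quadraticChar F c := by
    apply Finset.sum_nbij' (i := fun a => 1 + b * a⁻¹) (j := fun c => b * (c - 1)⁻¹)
    · intro a ha
      simp only [Finset.mem_sdiff, Finset.mem_univ, Finset.mem_singleton, true_and] at ha ⊢
      intro h
      have hz : b * a⁻¹ = 0 := by linear_combination h
      rcases mul_eq_zero.mp hz with h' | h'
      · exact hb h'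
      · exact ha (by simpa using h')
    · intro c hc
      simp only [Finset.mem_sdiff, Finset.mem_univ, Finset.mem_singleton, true_and] at hc ⊢
      intro h
      rcases mul_eq_zero.mp h with h' | h'
      · exact hb h'
      · have hc1 : c = 1 := by
          have := inv_eq_zero.mp h'
          linear_combination this
        exact hc hc1
    · intro a ha
      simp only [Finset.mem_sdiff, Finset.mem_univ, Finset.mem_singleton, true_and] at ha
      field_simp
      simp [hb]
    · intro c hc
      simp only [Finset.mem_sdiff, Finset.mem_univ, Finset.mem_singleton, true_and] at hc
      have hc1 : c - 1 ≠ 0 := fun h => hc (by linear_combination h)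
      field_simp
      ring
    · intro a _
      rfl
  rw [h1, Finset.sum_sdiff_eq_sub (Finset.subset_univ {1}),
    quadraticChar_sum_zero (hchar hF)]
  simp

lemma jac (hF : Fintype.card F % 4 = 3) (x y : F) :
    ∑ a : F, quadraticChar F (x + a) * quadraticChar F (y + a)
      = if x = y then (Fintype.card F : ℤ) - 1 else -1 := by
  have hre : ∑ a : F, quadraticChar F (x + a) * quadraticChar F (y + a)
      = ∑ t : F, quadraticChar F t * quadraticChar F (t + (y - x)) := by
    rw [← Equiv.sum_comp (Equiv.addLeft x)
      (fun t => quadraticChar F t * quadraticChar F (t + (y - x)))]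
    apply Finset.sum_congr rfl
    intro a _
    simp only [Equiv.coe_addLeft]
    rw [show x + a + (y - x) = y + a by ring]
  rw [hre]
  by_cases h : x = y
  · subst h
    simp only [sub_self, add_zero, if_true]
    have hsq : ∀ a : F, quadraticChar F a * quadraticChar F a
        = 1 - if a = 0 then (1:ℤ) else 0 := by
      intro a
      by_cases ha : a = 0
      · simp [ha]
      · have h2 := quadraticChar_sq_one (F := F) ha
        rw [pow_two] at h2
        rw [if_neg ha, sub_zero]
        exact h2
    rw [Finset.sum_congr rfl fun a _ => hsq a, Finset.sum_sub_distrib,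
      Finset.sum_const, Finset.card_univ,
      Finset.sum_ite_eq' Finset.univ (0 : F) (fun _ => (1:ℤ)),
      if_pos (Finset.mem_univ _)]
    simp
  · rw [if_neg h]
    exact jacobsthal hF (sub_ne_zero.mpr (Ne.symm h))

end SymmHadamardAux
set_option linter.unusedSectionVars false

namespace SymmHadamardAux

section Defs

variable (F : Type) [Field F] [Fintype F] [DecidableEq F]

/-- patched quadratic character: value 1 at 0 -/
def kk (t : F) : ℤ := if t = 0 then 1 else quadraticChar F t

/-- block-level "conference" coefficient on `GF(q) ∪ {∞}` -/
def mm : Option F → Option F → ℤ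
  | Option.some x, Option.some y => quadraticChar F (x + y)
  | Option.none, Option.none => 0
  | _, _ => 1

/-- block-level signed involution coefficient -/
def dd : Option F → Option F → ℤ
  | Option.some x, Option.some y => if x + y = 0 then 1 else 0
  | Option.none, Option.none => -1
  | _, _ => 0

/-- the Hadamard matrix on `(GF(q) ∪ {∞}) × GF(q)` -/
def HM : Matrix (Option F × F) (Option F × F) ℤ :=
  fun p q => mm F p.1 q.1 * kk F (p.2 + q.2) + dd F p.1 q.1

end Defs

variable {F : Type} [Field F] [Fintype F] [DecidableEq F]

lemma kk_eq (t : F) : kk F t = quadraticChar F t + (if t = 0 then 1 else 0) := by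
  unfold kk
  by_cases h : t = 0
  · simp [h]
  · simp [h]

lemma kk_pm (t : F) : kk F t = 1 ∨ kk F t = -1 := by
  unfold kk
  by_cases h : t = 0
  · simp [h]
  · simpa [h] using quadraticChar_dichotomy (F := F) h

lemma sum_chi_shift (hF : Fintype.card F % 4 = 3) (s : F) :
    ∑ t : F, quadraticChar F (s + t) = 0 := by
  have h := Equiv.sum_comp (Equiv.addLeft s) (fun t => (quadraticChar F t : ℤ))
  simp only [Equiv.coe_addLeft] at h
  rw [h]
  exact quadraticChar_sum_zero (hchar hF)

lemma sum_kk (hF : Fintype.card F % 4 = 3) (s : F) : ∑ t : F, kk F (s + t) = 1 := by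
  have : ∀ t : F, kk F (s + t) = quadraticChar F (s + t) + (if t = -s then 1 else 0) := by
    intro t
    rw [kk_eq]
    congr 1
    apply if_congr _ rfl rfl
    constructor
    · intro h; linear_combination h
    · intro h; rw [h]; ring
  rw [Finset.sum_congr rfl fun t _ => this t, Finset.sum_add_distrib, sum_chi_shift hF,
    Finset.sum_ite_eq' Finset.univ (-s : F) (fun _ => (1:ℤ)), if_pos (Finset.mem_univ _)]
  ring

lemma sum_kk_mul_ind (f : F → ℤ) (c : F) :
    ∑ t : F, f t * (if c + t = 0 then 1 else 0) = f (-c) := by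
  have : ∀ t : F, f t * (if c + t = 0 then 1 else 0) = if t = -c then f t else 0 := by
    intro t
    by_cases h : t = -c
    · rw [if_pos h, if_pos (by rw [h]; ring), mul_one]
    · rw [if_neg h, if_neg (fun hc => h (by linear_combination hc)), mul_zero]
  rw [Finset.sum_congr rfl fun t _ => this t,
    Finset.sum_ite_eq' Finset.univ (-c : F) f, if_pos (Finset.mem_univ _)]

/-- key scalar product of two rows of `K`. -/
lemma S1 (hF : Fintype.card F % 4 = 3) (a b : F) :
    ∑ t : F, kk F (a + t) * kk F (b + t)
      = if a = b then (Fintype.card F : ℤ) else -1 := by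
  have expand : ∀ t : F, kk F (a + t) * kk F (b + t)
      = quadraticChar F (a + t) * quadraticChar F (b + t)
        + quadraticChar F (a + t) * (if b + t = 0 then 1 else 0)
        + quadraticChar F (b + t) * (if a + t = 0 then 1 else 0)
        + (if a + t = 0 then 1 else 0) * (if b + t = 0 then 1 else 0) := by
    intro t
    rw [kk_eq, kk_eq]
    by_cases h1 : a + t = 0 <;> by_cases h2 : b + t = 0 <;>
      simp [h1, h2] <;> ring
  rw [Finset.sum_congr rfl fun t _ => expand t]
  rw [Finset.sum_add_distrib, Finset.sum_add_distrib, Finset.sum_add_distrib]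
  rw [jac hF a b, sum_kk_mul_ind (fun t => quadraticChar F (a + t)) b,
    sum_kk_mul_ind (fun t => quadraticChar F (b + t)) a]
  have h3 : ∑ t : F, (if a + t = 0 then (1:ℤ) else 0) * (if b + t = 0 then 1 else 0)
      = if a = b then 1 else 0 := by
    rw [sum_kk_mul_ind (fun t => if a + t = 0 then (1:ℤ) else 0) b]
    by_cases h : a = b
    · rw [if_pos h, if_pos (by rw [h]; ring)]
    · rw [if_neg h, if_neg (fun hc => h (by linear_combination hc))]
  rw [h3]
  have h4 : quadraticChar F (a + -b) + quadraticChar F (b + -a) = 0 := by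
    have := chi_odd hF (a - b)
    rw [show (-(a-b)) = b + -a by ring, show a - b = a + -b by ring] at this
    linarith
  by_cases h : a = b
  · simp only [if_pos h]
    linarith
  · simp only [if_neg h]
    linarith

end SymmHadamardAux
namespace SymmHadamardAux

variable {F : Type} [Field F] [Fintype F] [DecidableEq F]

lemma sum_ind (c : F) : ∑ t : F, (if c + t = 0 then (1:ℤ) else 0) = 1 := by
  simpa using sum_kk_mul_ind (fun _ => (1:ℤ)) c

lemma Mrow (hF : Fintype.card F % 4 = 3) (u v : Option F) :
    ∑ w : Option F, mm F u w * mm F v w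
      = if u = v then (Fintype.card F : ℤ) else 0 := by
  cases u <;> cases v <;> rw [Fintype.sum_option] <;> simp only [mm]
  · simp
  · rename_i y
    rw [zero_mul, zero_add]
    simp only [one_mul]
    rw [sum_chi_shift hF y]
    simp
  · rename_i x
    rw [mul_zero, zero_add]
    simp only [mul_one]
    rw [sum_chi_shift hF x]
    simp
  · rename_i x y
    rw [one_mul]
    have : ∀ w : F, quadraticChar F (x + w) * quadraticChar F (y + w)
        = quadraticChar F (x + w) * quadraticChar F (y + w) := fun _ => rfl
    rw [jac hF x y]
    by_cases h : x = y
    · simp [h]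
    · simp [h, Option.some.injEq]

lemma cross (hF : Fintype.card F % 4 = 3) (u v : Option F) :
    ∑ w : Option F, (mm F u w * dd F v w + dd F u w * mm F v w) = 0 := by
  cases u <;> cases v <;> rw [Fintype.sum_option] <;> simp only [mm, dd]
  · simp
  · rename_i y
    simp only [zero_mul, mul_zero, one_mul, zero_add, add_zero, mul_one, neg_mul, mul_neg]
    rw [sum_ind y]
    simp
  · rename_i x
    simp only [zero_mul, mul_zero, one_mul, zero_add, add_zero, mul_one, neg_mul, mul_neg]
    rw [sum_ind x]
    simp
  · rename_i x y
    simp only [zero_mul, mul_zero, add_zero, zero_add]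
    rw [Finset.sum_add_distrib]
    rw [sum_kk_mul_ind (fun w => quadraticChar F (x + w)) y]
    have h2 : ∑ w : F, (if x + w = 0 then (1:ℤ) else 0) * quadraticChar F (y + w)
        = quadraticChar F (y + -x) := by
      rw [Finset.sum_congr rfl fun w _ => mul_comm _ _]
      exact sum_kk_mul_ind (fun w => quadraticChar F (y + w)) x
    rw [h2]
    have h4 := chi_odd hF (x - y)
    rw [show (-(x-y)) = y + -x by ring, show x - y = x + -y by ring] at h4
    linarith

lemma Drow (u v : Option F) :
    ∑ w : Option F, dd F u w * dd F v w = if u = v then 1 else 0 := by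
  cases u <;> cases v <;> rw [Fintype.sum_option] <;> simp only [dd]
  · simp
  · simp
  · simp
  · rename_i x y
    simp only [zero_mul, mul_zero, zero_add]
    have h2 : ∑ w : F, (if x + w = 0 then (1:ℤ) else 0) * (if y + w = 0 then 1 else 0)
        = if y + -x = 0 then 1 else 0 := by
      rw [Finset.sum_congr rfl fun w _ => mul_comm _ _]
      exact sum_kk_mul_ind (fun w => if y + w = 0 then (1:ℤ) else 0) x
    rw [h2]
    by_cases h : x = y
    · rw [if_pos (by rw [h]; ring), if_pos (by rw [h])]
    · rw [if_neg (fun hc => h (by linear_combination -hc)),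
        if_neg (by simpa [Option.some.injEq] using h)]

end SymmHadamardAux

namespace SymmHadamardAux

variable {F : Type} [Field F] [Fintype F] [DecidableEq F]

lemma mm_comm (u v : Option F) : mm F u v = mm F v u := by
  cases u <;> cases v <;> simp only [mm]
  rename_i x y
  rw [add_comm]

lemma dd_comm (u v : Option F) : dd F u v = dd F v u := by
  cases u <;> cases v <;> simp only [dd]
  rename_i x y
  rw [add_comm]

lemma HM_entries (p q : Option F × F) : HM F p q = 1 ∨ HM F p q = -1 := by
  obtain ⟨u, a⟩ := p
  obtain ⟨v, b⟩ := q
  cases u <;> cases v <;> simp only [HM, mm, dd]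
  · right; ring
  · rw [one_mul, add_zero]; exact kk_pm _
  · rw [one_mul, add_zero]; exact kk_pm _
  · rename_i x y
    by_cases h : x + y = 0
    · rw [if_pos h, h, quadraticChar_zero, zero_mul, zero_add]
      left; rfl
    · rw [if_neg h, add_zero]
      rcases quadraticChar_dichotomy (F := F) h with h1 | h1 <;>
        rcases kk_pm (F := F) (a + b) with h2 | h2 <;> rw [h1, h2] <;> norm_num

lemma HM_symm : (HM F).transpose = HM F := by
  ext ⟨u, a⟩ ⟨v, b⟩
  simp only [Matrix.transpose_apply, HM]
  rw [mm_comm, dd_comm, add_comm a b]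

lemma HM_mul (hF : Fintype.card F % 4 = 3) :
    HM F * (HM F).transpose = ((Fintype.card F * (1 + Fintype.card F) : ℕ) : ℤ) • 1 := by
  rw [HM_symm]
  ext ⟨u, a⟩ ⟨v, b⟩
  rw [Matrix.mul_apply, Fintype.sum_prod_type]
  have inner : ∀ w : Option F,
      ∑ t : F, HM F (u, a) (w, t) * HM F (v, b) (w, t)
        = mm F u w * mm F v w * (if a = b then (Fintype.card F : ℤ) else -1)
          + (mm F u w * dd F v w + dd F u w * mm F v w)
          + (Fintype.card F : ℤ) * (dd F u w * dd F v w) := by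
    intro w
    have expand : ∀ t : F, HM F (u, a) (w, t) * HM F (v, b) (w, t)
        = mm F u w * mm F v w * (kk F (a + t) * kk F (b + t))
          + mm F u w * dd F v w * kk F (a + t)
          + dd F u w * mm F v w * kk F (b + t)
          + dd F u w * dd F v w := by
      intro t
      simp only [HM]
      ring
    rw [Finset.sum_congr rfl fun t _ => expand t]
    rw [Finset.sum_add_distrib, Finset.sum_add_distrib, Finset.sum_add_distrib,
      ← Finset.mul_sum, ← Finset.mul_sum, ← Finset.mul_sum,
      S1 hF a b, sum_kk hF a, sum_kk hF b, Finset.sum_const, Finset.card_univ]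
    push_cast
    ring
  have hs : ∀ p q : Option F × F, HM F p q = HM F q p := by
    intro p q
    have h := congrFun (congrFun (HM_symm (F := F)) p) q
    rw [Matrix.transpose_apply] at h
    exact h.symm
  rw [Finset.sum_congr rfl fun w (_ : w ∈ Finset.univ) =>
    Finset.sum_congr rfl fun t (_ : t ∈ Finset.univ) => by rw [hs (w, t) (v, b)]]
  rw [Finset.sum_congr rfl fun w _ => inner w]
  rw [Finset.sum_add_distrib, Finset.sum_add_distrib,
    ← Finset.sum_mul, ← Finset.mul_sum,
    Mrow hF u v, cross hF u v, Drow u v]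
  rw [Matrix.smul_apply, Matrix.one_apply, smul_eq_mul]
  by_cases hu : u = v
  · subst hu
    rw [if_pos (rfl : u = u), if_pos (rfl : u = u)]
    by_cases ha : a = b
    · subst ha
      rw [if_pos (rfl : a = a), if_pos rfl]
      push_cast
      ring
    · rw [if_neg ha, if_neg (show ¬((u, a) = (u, b)) from fun h => ha (congrArg Prod.snd h))]
      push_cast
      ring
  · rw [if_neg hu, if_neg hu,
      if_neg (show ¬((u, a) = (v, b)) from fun h => hu (congrArg Prod.fst h))]
    push_cast
    ring

end SymmHadamardAux
/-- For every prime power `q ≡ 3 (mod 8)` there exists a symmetric Hadamard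
matrix of order `q(1+q)`. -/
theorem symmetric_hadamard_of_prime_pow_mod_eight
    (q : ℕ) (hq : IsPrimePow q) (hq8 : q % 8 = 3) :
    ∃ H : Matrix (Fin (q * (1 + q))) (Fin (q * (1 + q))) ℤ,
      (∀ i j, H i j = 1 ∨ H i j = -1) ∧
      H.transpose = H ∧
      H * H.transpose = ((q * (1 + q) : ℕ) : ℤ) • 1 := by
  obtain ⟨p, k, hp, hk, rfl⟩ := hq
  haveI : Fact p.Prime := ⟨Nat.prime_iff.mpr hp⟩
  letI F := GaloisField p k
  letI : Fintype F := Fintype.ofFinite F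
  letI : DecidableEq F := Classical.decEq F
  have hcard : Fintype.card F = p ^ k := by
    rw [← Nat.card_eq_fintype_card]
    exact GaloisField.card p k hk.ne'
  have hF4 : Fintype.card F % 4 = 3 := by rw [hcard]; omega
  have hcards : Fintype.card (Fin (p ^ k * (1 + p ^ k))) = Fintype.card (Option F × F) := by
    rw [Fintype.card_fin, Fintype.card_prod, Fintype.card_option, hcard]
    ring
  let e : Fin (p ^ k * (1 + p ^ k)) ≃ Option F × F := Fintype.equivOfCardEq hcards
  refine ⟨(SymmHadamardAux.HM F).submatrix e e, ?_, ?_, ?_⟩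
  · intro i j
    exact SymmHadamardAux.HM_entries _ _
  · rw [Matrix.transpose_submatrix, SymmHadamardAux.HM_symm]
  · rw [Matrix.transpose_submatrix, SymmHadamardAux.HM_symm,
      Matrix.submatrix_mul_equiv]
    have hmul := SymmHadamardAux.HM_mul (F := F) hF4
    rw [SymmHadamardAux.HM_symm] at hmul
    rw [hmul]
    ext i j
    simp only [Matrix.submatrix_apply, Matrix.smul_apply, Matrix.one_apply, smul_eq_mul,
      Equiv.apply_eq_iff_eq, hcard]
end

section
/- For every prime power q with q ≡ 3 (mod 8), there exists a symmetric orthogonal design with parameters (1+q; 1, q) in two variables. Concretely: there exist (q+1) × (q+1) integer matrices A and B such that A and B are both symmetric, every row of A has exactly one nonzero entry and that entry is 1 or −1, every entry of B lies in {0, 1, −1} with B i j = 0 exactly when A i j ≠ 0, and A·Aᵀ = I, B·Bᵀ = q·I, A·Bᵀ + B·Aᵀ = 0. -/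
open Matrix Finset

set_option linter.unusedSectionVars false

section Paley

variable {F : Type*} [Field F] [Fintype F] [DecidableEq F]

private lemma paley_shift_sum (hF : ringChar F ≠ 2) (d : F) :
    ∑ x : F, quadraticChar F x * quadraticChar F (x + d) =
      if d = 0 then (Fintype.card F : ℤ) - 1 else -1 := by
  rcases eq_or_ne d 0 with rfl | hd
  · rw [if_pos rfl]
    have h1 : ∀ x : F, quadraticChar F x * quadraticChar F (x + 0)
        = if x = 0 then 0 else 1 := by
      intro x
      rcases eq_or_ne x 0 with rfl | hx
      · simp
      · rw [add_zero, if_neg hx, ← pow_two, quadraticChar_sq_one hx]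
    rw [Finset.sum_congr rfl fun x _ => h1 x]
    have h2 : ∀ x : F, (if x = 0 then (0 : ℤ) else 1)
        = 1 - (if x = 0 then 1 else 0) := by
      intro x; split <;> ring
    rw [Finset.sum_congr rfl fun x _ => h2 x, Finset.sum_sub_distrib,
      Finset.sum_const, Finset.sum_ite_eq' Finset.univ (0 : F) (fun _ => (1 : ℤ))]
    simp [Finset.card_univ]
  · rw [if_neg hd]
    have key : ∀ x : F, x ≠ 0 → quadraticChar F x * quadraticChar F (x + d)
        = quadraticChar F (1 + d * x⁻¹) := by
      intro x hx
      have hxd : x + d = x * (1 + d * x⁻¹) := by field_simp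
      rw [hxd, _root_.map_mul, ← mul_assoc, ← pow_two, quadraticChar_sq_one hx, one_mul]
    have h0 : quadraticChar F 0 * quadraticChar F (0 + d) = 0 := by simp
    rw [← Finset.sum_erase (f := fun x => quadraticChar F x * quadraticChar F (x + d))
      Finset.univ h0]
    rw [Finset.sum_congr rfl fun x hx => key x (Finset.mem_erase.mp hx).1]
    have hbij : ∑ x ∈ Finset.univ.erase (0 : F), quadraticChar F (1 + d * x⁻¹)
        = ∑ y ∈ Finset.univ.erase (1 : F), quadraticChar F y := by
      apply Finset.sum_nbij' (fun x => 1 + d * x⁻¹) (fun y => d * (y - 1)⁻¹)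
      · intro x hx
        have hx0 : x ≠ 0 := (Finset.mem_erase.mp hx).1
        simp only [Finset.mem_erase, Finset.mem_univ, and_true]
        intro h
        have : d * x⁻¹ = 0 := by linear_combination h
        rcases mul_eq_zero.mp this with h' | h'
        · exact hd h'
        · exact hx0 (inv_eq_zero.mp h')
      · intro y hy
        have hy1 : y ≠ 1 := (Finset.mem_erase.mp hy).1
        simp only [Finset.mem_erase, Finset.mem_univ, and_true]
        intro h
        rcases mul_eq_zero.mp h with h' | h'
        · exact hd h'
        · exact hy1 (by have := inv_eq_zero.mp h'; linear_combination this)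
      · intro x hx
        have hx0 : x ≠ 0 := (Finset.mem_erase.mp hx).1
        field_simp
        simp [hd]
      · intro y hy
        have hy1 : y ≠ 1 := (Finset.mem_erase.mp hy).1
        have : y - 1 ≠ 0 := sub_ne_zero.mpr hy1
        field_simp
        ring
      · intro x _; rfl
    rw [hbij, Finset.sum_erase_eq_sub (Finset.mem_univ (1 : F)),
      quadraticChar_sum_zero hF, _root_.map_one]
    ring

variable (F) in
private def paleyA : Matrix (Option F) (Option F) ℤ :=
  Matrix.of fun i j =>
    match i, j with
    | none, none => -1
    | none, some _ => 0
    | some _, none => 0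
    | some a, some b => if b = -a then 1 else 0

variable (F) in
private def paleyB : Matrix (Option F) (Option F) ℤ :=
  Matrix.of fun i j =>
    match i, j with
    | none, none => 0
    | none, some _ => -1
    | some _, none => -1
    | some a, some b => quadraticChar F (a + b)

@[simp] private lemma paleyA_nn : paleyA F none none = -1 := rfl
@[simp] private lemma paleyA_ns (b : F) : paleyA F none (some b) = 0 := rfl
@[simp] private lemma paleyA_sn (a : F) : paleyA F (some a) none = 0 := rfl
@[simp] private lemma paleyA_ss (a b : F) :
    paleyA F (some a) (some b) = if b = -a then 1 else 0 := rfl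
@[simp] private lemma paleyB_nn : paleyB F none none = 0 := rfl
@[simp] private lemma paleyB_ns (b : F) : paleyB F none (some b) = -1 := rfl
@[simp] private lemma paleyB_sn (a : F) : paleyB F (some a) none = -1 := rfl
@[simp] private lemma paleyB_ss (a b : F) :
    paleyB F (some a) (some b) = quadraticChar F (a + b) := rfl

private lemma paley_exists (hF4 : Fintype.card F % 4 = 3) :
    ∃ A B : Matrix (Option F) (Option F) ℤ,
      A.IsSymm ∧ B.IsSymm ∧
      (∀ i, ∃! j, A i j ≠ 0) ∧
      (∀ i j, A i j = 0 ∨ A i j = 1 ∨ A i j = -1) ∧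
      (∀ i j, B i j = 0 ∨ B i j = 1 ∨ B i j = -1) ∧
      (∀ i j, B i j = 0 ↔ A i j ≠ 0) ∧
      A * A.transpose = 1 ∧
      B * B.transpose = (Fintype.card F : ℤ) • 1 ∧
      A * B.transpose + B * A.transpose = 0 := by
  have hF : ringChar F ≠ 2 := by
    intro h
    have := FiniteField.even_card_iff_char_two.mp h
    omega
  have hneg : quadraticChar F (-1) = -1 := by
    rw [quadraticChar_neg_one hF, ZMod.χ₄_nat_eq_if_mod_four, hF4]
    norm_num
    omega
  refine ⟨paleyA F, paleyB F, ?_, ?_, ?_, ?_, ?_, ?_, ?_, ?_, ?_⟩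
  · -- A symmetric
    show (paleyA F)ᵀ = paleyA F
    ext i j
    match i, j with
    | none, none => rfl
    | none, some b => rfl
    | some a, none => rfl
    | some a, some b =>
      simp only [Matrix.transpose_apply, paleyA_ss]
      by_cases h : b = -a
      · rw [if_pos h, if_pos (by rw [h, neg_neg])]
      · rw [if_neg h, if_neg (fun hh => h (by rw [hh, neg_neg]))]
  · show (paleyB F)ᵀ = paleyB F
    ext i j
    match i, j with
    | none, none => rfl
    | none, some b => rfl
    | some a, none => rfl
    | some a, some b =>
      simp [Matrix.transpose_apply, add_comm]
  · -- unique nonzero in each row of A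
    intro i
    match i with
    | none =>
      refine ⟨none, by simp, fun j hj => ?_⟩
      match j with
      | none => rfl
      | some b => simp at hj
    | some a =>
      refine ⟨some (-a), by simp, fun j hj => ?_⟩
      match j with
      | none => simp at hj
      | some b =>
        simp only [paleyA_ss, ne_eq, ite_eq_right_iff, not_forall] at hj
        exact congrArg some hj.1
  · intro i j
    match i, j with
    | none, none => right; right; rfl
    | none, some b => left; rfl
    | some a, none => left; rfl
    | some a, some b =>
      rcases eq_or_ne b (-a) with h | h
      · right; left; simp [h]
      · left; simp [h]
  · intro i j
    match i, j with
    | none, none => left; rfl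
    | none, some b => right; right; rfl
    | some a, none => right; right; rfl
    | some a, some b =>
      rcases eq_or_ne (a + b) 0 with h | h
      · left; simp [h]
      · rcases quadraticChar_dichotomy h with h' | h'
        · right; left; simpa using h'
        · right; right; simpa using h'
  · intro i j
    match i, j with
    | none, none => simp
    | none, some b => simp
    | some a, none => simp
    | some a, some b =>
      simp only [paleyB_ss, paleyA_ss, quadraticChar_eq_zero_iff, ne_eq,
        ite_eq_right_iff, not_forall]
      constructor
      · intro h; exact ⟨eq_neg_of_add_eq_zero_right h, one_ne_zero⟩
      · rintro ⟨h, -⟩; rw [h]; ring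
  · -- A * Aᵀ = 1
    ext i k
    rw [Matrix.mul_apply]
    match i, k with
    | none, none => simp [Fintype.sum_option, Matrix.one_apply]
    | none, some c => simp [Fintype.sum_option, Matrix.one_apply]
    | some a, none => simp [Fintype.sum_option, Matrix.one_apply]
    | some a, some c =>
      simp only [Fintype.sum_option, Matrix.transpose_apply, paleyA_sn,
        paleyA_ss, Matrix.one_apply, ite_mul, one_mul, zero_mul, mul_zero,
        Finset.sum_ite_eq', Finset.mem_univ, if_true, Option.some.injEq,
        add_zero, zero_add]
      by_cases h : a = c
      · simp [h]
      · simp [h, (Ne.symm h : c ≠ a)]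
  · -- B * Bᵀ = q • 1
    ext i k
    rw [Matrix.mul_apply]
    match i, k with
    | none, none =>
      simp [Fintype.sum_option, Matrix.one_apply, Finset.card_univ]
    | none, some c =>
      simp only [Fintype.sum_option, Matrix.transpose_apply, paleyB_nn,
        paleyB_ns, paleyB_sn, paleyB_ss, Matrix.smul_apply, Matrix.one_apply]
      have : ∑ b : F, quadraticChar F (c + b) = 0 := by
        rw [Fintype.sum_equiv (Equiv.addLeft c)
          (fun b => quadraticChar F (c + b)) (fun x => quadraticChar F x)
          (fun b => rfl)]
        exact quadraticChar_sum_zero hF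
      simp only [neg_one_mul, Finset.sum_neg_distrib, this]
      simp
    | some a, none =>
      simp only [Fintype.sum_option, Matrix.transpose_apply, paleyB_nn,
        paleyB_ns, paleyB_sn, paleyB_ss, Matrix.smul_apply, Matrix.one_apply]
      have : ∑ b : F, quadraticChar F (a + b) = 0 := by
        rw [Fintype.sum_equiv (Equiv.addLeft a)
          (fun b => quadraticChar F (a + b)) (fun x => quadraticChar F x)
          (fun b => rfl)]
        exact quadraticChar_sum_zero hF
      simp only [mul_neg_one, Finset.sum_neg_distrib, this]
      simp
    | some a, some c =>
      simp only [Fintype.sum_option, Matrix.transpose_apply, paleyB_sn,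
        paleyB_ss, Matrix.smul_apply, Matrix.one_apply]
      have h1 : ∑ b : F, quadraticChar F (a + b) * quadraticChar F (c + b)
          = ∑ x : F, quadraticChar F x * quadraticChar F (x + (c - a)) := by
        apply Fintype.sum_equiv (Equiv.addLeft a)
        intro b
        congr 1
        congr 1
        show c + b = a + b + (c - a)
        ring
      rw [h1, paley_shift_sum hF]
      rcases eq_or_ne a c with rfl | h
      · rw [if_pos (by ring), if_pos rfl]
        simp
      · rw [if_neg (fun hh => h (sub_eq_zero.mp hh).symm),
          if_neg (by simpa using h)]
        simp
  · -- A * Bᵀ + B * Aᵀ = 0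
    ext i k
    rw [Matrix.add_apply, Matrix.mul_apply, Matrix.mul_apply]
    match i, k with
    | none, none => simp [Fintype.sum_option]
    | none, some c =>
      simp [Fintype.sum_option, ite_mul, mul_ite, Finset.sum_ite_eq']
    | some a, none =>
      simp [Fintype.sum_option, ite_mul, mul_ite, Finset.sum_ite_eq']
    | some a, some c =>
      simp only [Fintype.sum_option, Matrix.transpose_apply, paleyA_sn,
        paleyA_ss, paleyB_sn, paleyB_ss, Matrix.zero_apply, ite_mul, mul_ite,
        one_mul, mul_one, zero_mul, mul_zero, Finset.sum_ite_eq',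
        Finset.mem_univ, if_true]
      have h2 : a + -c = -1 * (c + -a) := by ring
      rw [h2, _root_.map_mul, hneg]
      ring

end Paley

/-- For every prime power `q ≡ 3 (mod 8)` there exists a symmetric orthogonal
design `OD(1+q; 1, q)` in two variables, given concretely by the pair of
coefficient matrices `A`, `B`. -/
theorem symmetric_orthogonal_design_of_prime_pow_mod_eight
    (q : ℕ) (hq : IsPrimePow q) (hq8 : q % 8 = 3) :
    ∃ A B : Matrix (Fin (q + 1)) (Fin (q + 1)) ℤ,
      A.IsSymm ∧ B.IsSymm ∧
      (∀ i, ∃! j, A i j ≠ 0) ∧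
      (∀ i j, A i j = 0 ∨ A i j = 1 ∨ A i j = -1) ∧
      (∀ i j, B i j = 0 ∨ B i j = 1 ∨ B i j = -1) ∧
      (∀ i j, B i j = 0 ↔ A i j ≠ 0) ∧
      A * A.transpose = 1 ∧
      B * B.transpose = (q : ℤ) • 1 ∧
      A * B.transpose + B * A.transpose = 0 := by
  obtain ⟨p, n, hp, hn, rfl⟩ := hq
  haveI : Fact p.Prime := ⟨hp.nat_prime⟩
  let F := GaloisField p n
  haveI : Fintype F := Fintype.ofFinite F
  letI : DecidableEq F := Classical.decEq F
  have hcard : Fintype.card F = p ^ n := by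
    rw [← Nat.card_eq_fintype_card]; exact GaloisField.card (p := p) (n := n) hn.ne'
  have hF4 : Fintype.card F % 4 = 3 := by
    rw [hcard]
    have h48 : p ^ n % 8 % 4 = p ^ n % 4 := Nat.mod_mod_of_dvd _ (by norm_num)
    omega
  obtain ⟨A, B, hAs, hBs, hAu, hAe, hBe, hBA, hAA, hBB, hABBA⟩ := paley_exists hF4
  have e : Fin (p ^ n + 1) ≃ Option F :=
    Fintype.equivOfCardEq (by simp [hcard])
  refine ⟨A.submatrix e e, B.submatrix e e, ?_, ?_, ?_, ?_, ?_, ?_, ?_, ?_, ?_⟩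
  · show (A.submatrix e e)ᵀ = A.submatrix e e
    rw [Matrix.transpose_submatrix, hAs]
  · show (B.submatrix e e)ᵀ = B.submatrix e e
    rw [Matrix.transpose_submatrix, hBs]
  · intro i
    obtain ⟨j, hj, hu⟩ := hAu (e i)
    refine ⟨e.symm j, ?_, ?_⟩
    · simpa [Matrix.submatrix_apply] using hj
    · intro y hy
      have := hu (e y) (by simpa [Matrix.submatrix_apply] using hy)
      rw [← this]; simp
  · intro i j; exact hAe (e i) (e j)
  · intro i j; exact hBe (e i) (e j)
  · intro i j; exact hBA (e i) (e j)
  · rw [Matrix.transpose_submatrix, Matrix.submatrix_mul_equiv, hAA,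
      Matrix.submatrix_one_equiv]
  · rw [Matrix.transpose_submatrix, Matrix.submatrix_mul_equiv, hBB, hcard]
    ext i j
    simp only [Matrix.submatrix_apply, Matrix.smul_apply, Matrix.one_apply,
      Equiv.apply_eq_iff_eq]
  · rw [Matrix.transpose_submatrix, Matrix.transpose_submatrix,
      Matrix.submatrix_mul_equiv, Matrix.submatrix_mul_equiv]
    ext i j
    rw [Matrix.add_apply, Matrix.submatrix_apply, Matrix.submatrix_apply,
      ← Matrix.add_apply, hABBA]
    simp
end

section
/- Let n be a positive integer, let A, B, C, D be circulant n × n integer matrices (indexed by ℤ/nℤ) satisfying A·Aᵀ + B·Bᵀ + C·Cᵀ + D·Dᵀ = k·I for some integer k, and let R be the permutation matrix of negation on ℤ/nℤ (R i j = 1 if i + j = 0, otherwise 0). Then the 4n × 4n block matrix X = [[A, BR, CR, DR], [−BR, A, −RD, RC], [−CR, RD, A, −RB], [−DR, −RC, RB, A]] (the Goethals–Seidel array with these matrices plugged in) satisfies X·Xᵀ = k·I₍₄ₙ₎. -/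
set_option linter.unusedSectionVars false

namespace GSaux
open Matrix

def Circ {n : ℕ} (M : Matrix (ZMod n) (ZMod n) ℤ) : Prop :=
  ∀ i j t : ZMod n, M (i + t) (j + t) = M i j

variable {n : ℕ} [NeZero n]

lemma Circ.transpose {M : Matrix (ZMod n) (ZMod n) ℤ} (h : Circ M) : Circ Mᵀ :=
  fun i j t => h j i t

lemma Circ.entry {M : Matrix (ZMod n) (ZMod n) ℤ} (h : Circ M) (i j : ZMod n) :
    M i j = M (i - j) 0 := by
  simpa using h (i - j) 0 j

lemma Circ.comm {M N : Matrix (ZMod n) (ZMod n) ℤ} (hM : Circ M) (hN : Circ N) :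
    M * N = N * M := by
  ext i j
  rw [Matrix.mul_apply, Matrix.mul_apply]
  refine Fintype.sum_equiv (Equiv.subLeft (i + j)) _ _ fun l => ?_
  simp only [Equiv.subLeft_apply]
  rw [hM.entry i l, hN.entry l j, hN.entry i (i + j - l), hM.entry (i + j - l) j,
    show i - (i + j - l) = l - j from by ring, show i + j - l - j = i - l from by ring,
    mul_comm]

variable {R : Matrix (ZMod n) (ZMod n) ℤ}

lemma R_entry (hR : ∀ i j : ZMod n, R i j = if i + j = 0 then 1 else 0) (i j : ZMod n) :
    R i j = if j = -i then 1 else 0 := by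
  rw [hR]
  by_cases h : j = -i
  · subst h; simp
  · rw [if_neg h, if_neg fun hc => h (eq_neg_of_add_eq_zero_right hc)]

lemma R_entry' (hR : ∀ i j : ZMod n, R i j = if i + j = 0 then 1 else 0) (i j : ZMod n) :
    R i j = if i = -j then 1 else 0 := by
  rw [hR]
  by_cases h : i = -j
  · subst h; simp
  · rw [if_neg h, if_neg fun hc => h (eq_neg_of_add_eq_zero_left hc)]

lemma R_mulL (hR : ∀ i j : ZMod n, R i j = if i + j = 0 then 1 else 0)
    (M : Matrix (ZMod n) (ZMod n) ℤ) (i j : ZMod n) : (R * M) i j = M (-i) j := by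
  rw [Matrix.mul_apply]
  simp only [R_entry hR, ite_mul, one_mul, zero_mul]
  simp

lemma R_mulR (hR : ∀ i j : ZMod n, R i j = if i + j = 0 then 1 else 0)
    (M : Matrix (ZMod n) (ZMod n) ℤ) (i j : ZMod n) : (M * R) i j = M i (-j) := by
  rw [Matrix.mul_apply]
  simp only [R_entry' hR, mul_ite, mul_one, mul_zero]
  simp

lemma R_symm (hR : ∀ i j : ZMod n, R i j = if i + j = 0 then 1 else 0) : Rᵀ = R := by
  ext i j
  simp [hR, add_comm]

lemma R_mul_self (hR : ∀ i j : ZMod n, R i j = if i + j = 0 then 1 else 0) : R * R = 1 := by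
  ext i j
  rw [R_mulR hR, hR, Matrix.one_apply]
  simp [add_neg_eq_zero]

lemma mulR_eq (hR : ∀ i j : ZMod n, R i j = if i + j = 0 then 1 else 0)
    {M : Matrix (ZMod n) (ZMod n) ℤ} (hM : Circ M) : M * R = R * Mᵀ := by
  ext i j
  rw [R_mulR hR, R_mulL hR, Matrix.transpose_apply]
  calc M i (-j) = M (i + (j - i)) (-j + (j - i)) := (hM i (-j) (j - i)).symm
    _ = M j (-i) := by
        rw [show i + (j - i) = j from by ring, show -j + (j - i) = -i from by ring]

lemma mulR_assoc (hR : ∀ i j : ZMod n, R i j = if i + j = 0 then 1 else 0)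
    {M : Matrix (ZMod n) (ZMod n) ℤ} (hM : Circ M) (X : Matrix (ZMod n) (ZMod n) ℤ) :
    M * (R * X) = R * (Mᵀ * X) := by
  rw [← mul_assoc, mulR_eq hR hM, mul_assoc]

lemma block_mul_transpose_apply {ι : Type*} [Fintype ι] (Y : Fin 4 → Fin 4 → Matrix ι ι ℤ)
    (i j : Fin 4) (p q : ι) :
    (Matrix.of (fun a b : Fin 4 × ι => Y a.1 b.1 a.2 b.2) *
     (Matrix.of (fun a b : Fin 4 × ι => Y a.1 b.1 a.2 b.2))ᵀ) (i, p) (j, q)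
      = (∑ l : Fin 4, Y i l * (Y j l)ᵀ) p q := by
  simp [Matrix.mul_apply, Matrix.sum_apply, Fintype.sum_prod_type]

end GSaux

open Matrix GSaux in
set_option maxHeartbeats 1000000 in
/-- The Goethals–Seidel array: if `A, B, C, D` are circulant integer matrices
indexed by `ℤ/nℤ` with `A Aᵀ + B Bᵀ + C Cᵀ + D Dᵀ = k I`, and `R` is the
permutation matrix of negation, then the `4n × 4n` Goethals–Seidel block
matrix `X` satisfies `X Xᵀ = k I`. -/
theorem goethals_seidel_array
    (n : ℕ) [NeZero n] (k : ℤ)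
    (A B C D : Matrix (ZMod n) (ZMod n) ℤ)
    (hA : ∀ i j t : ZMod n, A (i + t) (j + t) = A i j)
    (hB : ∀ i j t : ZMod n, B (i + t) (j + t) = B i j)
    (hC : ∀ i j t : ZMod n, C (i + t) (j + t) = C i j)
    (hD : ∀ i j t : ZMod n, D (i + t) (j + t) = D i j)
    (R : Matrix (ZMod n) (ZMod n) ℤ)
    (hR : ∀ i j : ZMod n, R i j = if i + j = 0 then 1 else 0)
    (hk : A * A.transpose + B * B.transpose + C * C.transpose + D * D.transpose
          = k • 1)
    (X : Matrix (Fin 4 × ZMod n) (Fin 4 × ZMod n) ℤ)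
    (hX : X = Matrix.of fun p q : Fin 4 × ZMod n =>
      (![![A,          B * R,      C * R,      D * R],
         ![-(B * R),   A,          -(R * D),   R * C],
         ![-(C * R),   R * D,      A,          -(R * B)],
         ![-(D * R),   -(R * C),   R * B,      A]] p.1 q.1) p.2 q.2) :
    X * X.transpose = k • 1 := by
  have ha : Circ A := hA
  have hb : Circ B := hB
  have hc : Circ C := hC
  have hd : Circ D := hD
  have rr : ∀ Z : Matrix (ZMod n) (ZMod n) ℤ, R * (R * Z) = Z := by
    intro Z; rw [← mul_assoc, R_mul_self hR, one_mul]
  have eA := mulR_eq hR ha; have eB := mulR_eq hR hb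
  have eC := mulR_eq hR hc; have eD := mulR_eq hR hd
  have eAt := mulR_eq hR ha.transpose; have eBt := mulR_eq hR hb.transpose
  have eCt := mulR_eq hR hc.transpose; have eDt := mulR_eq hR hd.transpose
  have fA := mulR_assoc hR ha; have fB := mulR_assoc hR hb
  have fC := mulR_assoc hR hc; have fD := mulR_assoc hR hd
  have fAt := mulR_assoc hR ha.transpose; have fBt := mulR_assoc hR hb.transpose
  have fCt := mulR_assoc hR hc.transpose; have fDt := mulR_assoc hR hd.transpose
  have rs := R_symm hR
  have c01 : Aᵀ * A = A * Aᵀ := Circ.comm ha.transpose ha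
  have c02 : B * A = A * B := Circ.comm hb ha
  have c03 : Bᵀ * A = A * Bᵀ := Circ.comm hb.transpose ha
  have c04 : C * A = A * C := Circ.comm hc ha
  have c05 : Cᵀ * A = A * Cᵀ := Circ.comm hc.transpose ha
  have c06 : D * A = A * D := Circ.comm hd ha
  have c07 : Dᵀ * A = A * Dᵀ := Circ.comm hd.transpose ha
  have c12 : B * Aᵀ = Aᵀ * B := Circ.comm hb ha.transpose
  have c13 : Bᵀ * Aᵀ = Aᵀ * Bᵀ := Circ.comm hb.transpose ha.transpose
  have c14 : C * Aᵀ = Aᵀ * C := Circ.comm hc ha.transpose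
  have c15 : Cᵀ * Aᵀ = Aᵀ * Cᵀ := Circ.comm hc.transpose ha.transpose
  have c16 : D * Aᵀ = Aᵀ * D := Circ.comm hd ha.transpose
  have c17 : Dᵀ * Aᵀ = Aᵀ * Dᵀ := Circ.comm hd.transpose ha.transpose
  have c23 : Bᵀ * B = B * Bᵀ := Circ.comm hb.transpose hb
  have c24 : C * B = B * C := Circ.comm hc hb
  have c25 : Cᵀ * B = B * Cᵀ := Circ.comm hc.transpose hb
  have c26 : D * B = B * D := Circ.comm hd hb
  have c27 : Dᵀ * B = B * Dᵀ := Circ.comm hd.transpose hb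
  have c34 : C * Bᵀ = Bᵀ * C := Circ.comm hc hb.transpose
  have c35 : Cᵀ * Bᵀ = Bᵀ * Cᵀ := Circ.comm hc.transpose hb.transpose
  have c36 : D * Bᵀ = Bᵀ * D := Circ.comm hd hb.transpose
  have c37 : Dᵀ * Bᵀ = Bᵀ * Dᵀ := Circ.comm hd.transpose hb.transpose
  have c45 : Cᵀ * C = C * Cᵀ := Circ.comm hc.transpose hc
  have c46 : D * C = C * D := Circ.comm hd hc
  have c47 : Dᵀ * C = C * Dᵀ := Circ.comm hd.transpose hc
  have c56 : D * Cᵀ = Cᵀ * D := Circ.comm hd hc.transpose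
  have c57 : Dᵀ * Cᵀ = Cᵀ * Dᵀ := Circ.comm hd.transpose hc.transpose
  have c67 : Dᵀ * D = D * Dᵀ := Circ.comm hd.transpose hd
  have key : ∀ a b : Fin 4,
      (∑ l : Fin 4,
        (![![A,          B * R,      C * R,      D * R],
           ![-(B * R),   A,          -(R * D),   R * C],
           ![-(C * R),   R * D,      A,          -(R * B)],
           ![-(D * R),   -(R * C),   R * B,      A]] a l) *
        (![![A,          B * R,      C * R,      D * R],
           ![-(B * R),   A,          -(R * D),   R * C],
           ![-(C * R),   R * D,      A,          -(R * B)],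
           ![-(D * R),   -(R * C),   R * B,      A]] b l)ᵀ)
      = if a = b then (k • 1 : Matrix (ZMod n) (ZMod n) ℤ) else 0 := by
    intro a b
    fin_cases a <;> fin_cases b <;>
      simp only [Fin.zero_eta, Fin.mk_one, Fin.reduceFinMk, Fin.sum_univ_four,
        Matrix.cons_val_zero, Matrix.cons_val_one,
        Matrix.cons_val_two, Matrix.cons_val_three, Matrix.head_cons, Matrix.tail_cons,
        Fin.isValue, if_true, reduceIte, Fin.reduceEq, if_false] <;>
      simp only [Matrix.transpose_neg, Matrix.transpose_mul, Matrix.transpose_transpose,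
        rs, neg_mul, mul_neg, neg_neg, mul_assoc, rr,
        eA, eB, eC, eD, eAt, eBt, eCt, eDt, fA, fB, fC, fD, fAt, fBt, fCt, fDt] <;>
      (try simp only [c01, c02, c03, c04, c05, c06, c07, c12, c13, c14, c15, c16, c17,
        c23, c24, c25, c26, c27, c34, c35, c36, c37, c45, c46, c47, c56, c57, c67]) <;>
      first
        | (rw [← hk]; try abel)
        | abel
  subst hX
  ext ⟨i, p⟩ ⟨j, q⟩
  rw [block_mul_transpose_apply, key i j]
  by_cases h : i = j <;> by_cases h2 : p = q <;>
    simp [h, h2, Matrix.one_apply, Matrix.smul_apply, Prod.ext_iff]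
end

section
/- Let n be a positive integer, let A, B, D be circulant n × n integer matrices (indexed by ℤ/nℤ) with A symmetric, satisfying A·Aᵀ + 2·B·Bᵀ + D·Dᵀ = k·I for some integer k, and let R be the permutation matrix of negation on ℤ/nℤ. Then the 4n × 4n block matrix Y = [[−A, BR, BR, DR], [BR, RD, A, −RB], [BR, A, −RD, RB], [DR, −RB, RB, A]] (the Balonin/propus array with C = B plugged in) is symmetric and satisfies Y·Yᵀ = k·I₍₄ₙ₎. -/
section Aux
variable {n : ℕ} [NeZero n]

/-- circulant predicate -/
def balCirc (M : Matrix (ZMod n) (ZMod n) ℤ) : Prop :=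
  ∀ i j t : ZMod n, M (i + t) (j + t) = M i j

theorem balCirc_transpose {M : Matrix (ZMod n) (ZMod n) ℤ} (hM : balCirc M) :
    balCirc M.transpose := fun i j t => hM j i t

theorem balCirc_comm {M N : Matrix (ZMod n) (ZMod n) ℤ}
    (hM : balCirc M) (hN : balCirc N) : M * N = N * M := by
  ext i j
  simp only [Matrix.mul_apply]
  refine Finset.sum_nbij' (fun a => i + j - a) (fun a => i + j - a) ?_ ?_ ?_ ?_ ?_ <;>
    intro a _ <;> try simp only [Finset.mem_univ, true_and]
  · ring_nf
  · ring_nf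
  · have h1 : M i a = M (i + j - a) j := by
      have := hM (i + j - a) j (a - j); rw [← this]; ring_nf
    have h2 : N a j = N i (i + j - a) := by
      have := hN a j (i - a); rw [← this]; ring_nf
    rw [h1, h2, mul_comm]

variable {R : Matrix (ZMod n) (ZMod n) ℤ}
  (hR : ∀ i j : ZMod n, R i j = if i + j = 0 then 1 else 0)

include hR

theorem balR_transpose : R.transpose = R := by
  ext i j
  simp [Matrix.transpose_apply, hR, add_comm]

theorem balR_mul_R : R * R = 1 := by
  ext i j
  simp only [Matrix.mul_apply, hR]
  rw [Finset.sum_eq_single (-i)]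
  · simp only [add_neg_cancel, if_true, Matrix.one_apply, neg_add_eq_zero]
    by_cases h : i = j <;> simp [h, eq_comm]
  · intro b _ hb
    rw [if_neg, zero_mul]
    intro h; exact hb (by linear_combination h - i - b)
  · simp

theorem balCirc_mul_R {M : Matrix (ZMod n) (ZMod n) ℤ} (hM : balCirc M) :
    M * R = R * M.transpose := by
  ext i j
  simp only [Matrix.mul_apply, hR, Matrix.transpose_apply, mul_ite, mul_one, mul_zero,
    ite_mul, one_mul, zero_mul]
  rw [Finset.sum_eq_single (-j), Finset.sum_eq_single (-i)]
  · simp only [add_neg_cancel, neg_add_cancel, if_true]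
    have := hM j (-i) (i - j)
    rw [show j + (i - j) = i by ring, show -i + (i - j) = -j by ring] at this
    rw [this]
  · intro b _ hb
    have : ¬(i + b = 0) := fun h => hb (by linear_combination h - i)
    simp [this]
  · simp
  · intro b _ hb
    have : ¬(b + j = 0) := fun h => hb (by linear_combination h - j)
    simp [this]
  · simp

theorem balR_mul_circ {M : Matrix (ZMod n) (ZMod n) ℤ} (hM : balCirc M) :
    R * M = M.transpose * R := by
  have := balCirc_mul_R hR (balCirc_transpose hM)
  rw [Matrix.transpose_transpose] at this
  exact this.symm

end Aux

def balBlk {ι : Type*} (M : Fin 4 → Fin 4 → Matrix ι ι ℤ) :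
    Matrix (Fin 4 × ι) (Fin 4 × ι) ℤ :=
  Matrix.of fun p q => M p.1 q.1 p.2 q.2

theorem balBlk_mul {ι : Type*} [Fintype ι] (M N : Fin 4 → Fin 4 → Matrix ι ι ℤ) :
    balBlk M * balBlk N = balBlk (fun a b => ∑ c, M a c * N c b) := by
  ext ⟨a, i⟩ ⟨b, j⟩
  simp [balBlk, Matrix.mul_apply, Matrix.sum_apply, Fintype.sum_prod_type]

theorem balBlk_transpose {ι : Type*} (M : Fin 4 → Fin 4 → Matrix ι ι ℤ) :
    (balBlk M).transpose = balBlk (fun a b => (M b a).transpose) := rfl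

theorem balBlk_smul_one {ι : Type*} [Fintype ι] [DecidableEq ι] (k : ℤ) :
    (k • 1 : Matrix (Fin 4 × ι) (Fin 4 × ι) ℤ) =
      balBlk (fun a b => if a = b then k • (1 : Matrix ι ι ℤ) else 0) := by
  ext ⟨a, i⟩ ⟨b, j⟩
  simp only [balBlk, Matrix.smul_apply, Matrix.one_apply, Matrix.of_apply, Prod.mk.injEq,
    smul_eq_mul]
  by_cases h : a = b <;> by_cases h2 : i = j <;>
    simp [h, h2, Matrix.smul_apply, Matrix.one_apply, Matrix.zero_apply]

set_option maxHeartbeats 2000000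


/-- The Balonin (propus) array with `C = B`: if `A, B, D` are circulant integer
matrices indexed by `ℤ/nℤ` with `A` symmetric and
`A Aᵀ + 2 B Bᵀ + D Dᵀ = k I`, and `R` is the permutation matrix of negation,
then the `4n × 4n` Balonin block matrix `Y` is symmetric and `Y Yᵀ = k I`. -/
theorem balonin_propus_array
    (n : ℕ) [NeZero n] (k : ℤ)
    (A B D : Matrix (ZMod n) (ZMod n) ℤ)
    (hA : ∀ i j t : ZMod n, A (i + t) (j + t) = A i j)
    (hB : ∀ i j t : ZMod n, B (i + t) (j + t) = B i j)
    (hD : ∀ i j t : ZMod n, D (i + t) (j + t) = D i j)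
    (hAsymm : A.transpose = A)
    (R : Matrix (ZMod n) (ZMod n) ℤ)
    (hR : ∀ i j : ZMod n, R i j = if i + j = 0 then 1 else 0)
    (hk : A * A.transpose + 2 • (B * B.transpose) + D * D.transpose = k • 1)
    (Y : Matrix (Fin 4 × ZMod n) (Fin 4 × ZMod n) ℤ)
    (hY : Y = Matrix.of fun p q : Fin 4 × ZMod n =>
      (![![-A,      B * R,    B * R,      D * R],
         ![B * R,   R * D,    A,          -(R * B)],
         ![B * R,   A,        -(R * D),   R * B],
         ![D * R,   -(R * B), R * B,      A]] p.1 q.1) p.2 q.2) :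
    Y.transpose = Y ∧ Y * Y.transpose = k • 1 := by
  have cBt : balCirc B.transpose := balCirc_transpose hB
  have cDt : balCirc D.transpose := balCirc_transpose hD
  have hRR : R * R = 1 := balR_mul_R hR
  have mR : ∀ X : Matrix (ZMod n) (ZMod n) ℤ, balCirc X → X * R = R * X.transpose :=
    fun X h => balCirc_mul_R hR h
  have Rm : ∀ X : Matrix (ZMod n) (ZMod n) ℤ, balCirc X → R * X = X.transpose * R :=
    fun X h => balR_mul_circ hR h
  have hRD : R * D = D.transpose * R := Rm D hD
  have hRB : R * B = B.transpose * R := Rm B hB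
  -- the flattened block matrix
  have hY' : Y = balBlk
      ![![-A,      B * R,    B * R,      D * R],
        ![B * R,   R * D,    A,          -(R * B)],
        ![B * R,   A,        -(R * D),   R * B],
        ![D * R,   -(R * B), R * B,      A]] := hY
  have pRN : ∀ X Z : Matrix (ZMod n) (ZMod n) ℤ, balCirc Z →
      X * R * Z = X * Z.transpose * R := by
    intro X Z hZ
    rw [mul_assoc, Rm Z hZ, ← mul_assoc]
  have hRR2 : ∀ X : Matrix (ZMod n) (ZMod n) ℤ, X * R * R = X := by
    intro X; rw [mul_assoc, hRR, mul_one]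
  have hsymm : Y.transpose = Y := by
    rw [hY', balBlk_transpose]
    apply congrArg balBlk
    funext a b
    fin_cases a <;> fin_cases b <;>
      simp [Matrix.transpose_mul, Matrix.transpose_neg, hAsymm, balR_transpose hR,
        ← mR B hB, ← mR D hD, hRD, hRB]
  refine ⟨hsymm, ?_⟩
  rw [hsymm, hY', balBlk_mul, balBlk_smul_one]
  apply congrArg balBlk
  have hk' : A * A + (B * B.transpose + B * B.transpose) + D * D.transpose = k • 1 := by
    rw [← hk, hAsymm, two_smul]
  have hk0 : A * A + 2 • (B * B.transpose) + D * D.transpose = k • 1 := by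
    rw [← hk, hAsymm]
  funext a b
  fin_cases a <;> fin_cases b <;>
  all_goals simp only [Fin.sum_univ_four, Fin.isValue, Matrix.cons_val', Matrix.cons_val_zero,
      Matrix.cons_val_one, Matrix.head_cons, Matrix.head_fin_const, Matrix.cons_val_fin_one,
      Matrix.empty_val', Matrix.cons_val_succ, Matrix.cons_val_two, Matrix.cons_val_three,
      Matrix.tail_cons, Matrix.head_val', if_true, if_false, Fin.zero_eta, Fin.mk_one,
      Fin.reduceEq, Fin.reduceFinMk, reduceIte]
  all_goals simp only [hRD, hRB, neg_mul, mul_neg, neg_neg, ← mul_assoc]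
  all_goals try simp only [pRN _ _ hA, pRN _ _ hB, pRN _ _ hD, pRN _ _ cBt, pRN _ _ cDt]
  all_goals try simp only [hRR2, Matrix.transpose_transpose, hAsymm]
  · rw [← hk0]; abel
  · rw [balCirc_comm hA hB, balCirc_comm hD hB]; abel
  · rw [balCirc_comm hA hB, balCirc_comm hD hB]; abel
  · rw [balCirc_comm hA hD]; abel
  · rw [balCirc_comm hA hB, balCirc_comm cDt cBt]; abel
  · rw [balCirc_comm cDt hD, balCirc_comm cBt hB, ← hk0]; abel
  · rw [balCirc_comm hA cDt, balCirc_comm cBt hB]; abel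
  · rw [balCirc_comm hA cBt, balCirc_comm cDt hB]; abel
  · rw [balCirc_comm hA hB, balCirc_comm cDt cBt]; abel
  · rw [balCirc_comm hA cDt, balCirc_comm cBt hB]; abel
  · rw [balCirc_comm cDt hD, balCirc_comm cBt hB, ← hk0]; abel
  · rw [balCirc_comm hA cBt, balCirc_comm cDt hB]; abel
  · rw [balCirc_comm hA hD]; abel
  · rw [balCirc_comm hA cBt, balCirc_comm hD cBt]; abel
  · rw [balCirc_comm hA cBt, balCirc_comm hD cBt]; abel
  · rw [balCirc_comm cBt hB, ← hk0]; abel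
end

section
/- Let q be a prime power with q ≡ 3 (mod 4), let F_q be the finite field with q elements, let χ be the quadratic character of F_q (with values in ℤ, χ(0) = 0), let Q be the Paley core matrix indexed by F_q with Q x y = χ(x − y), let R be the permutation matrix of negation on F_q, and let D = (I + Q)·R. Then D is a symmetric matrix with all entries equal to 1 or −1. -/
/-- For a prime power `q ≡ 3 (mod 4)`, with `Q` the Paley core matrix over
`F_q`, `R` the permutation matrix of negation on `F_q`, and `D = (I + Q) R`,
the matrix `D` is symmetric with all entries `±1`. -/
theorem paley_D_symmetric_pm_one
    (q : ℕ) (hq : IsPrimePow q) (hq4 : q % 4 = 3)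
    (F : Type*) [Field F] [Fintype F] [DecidableEq F]
    (hF : Fintype.card F = q)
    (Q : Matrix F F ℤ) (hQ : ∀ x y : F, Q x y = quadraticChar F (x - y))
    (R : Matrix F F ℤ) (hR : ∀ x y : F, R x y = if x + y = 0 then 1 else 0)
    (D : Matrix F F ℤ) (hD : D = (1 + Q) * R) :
    D.transpose = D ∧ ∀ x y : F, D x y = 1 ∨ D x y = -1 := by
  have key : ∀ x y : F, D x y =
      (if x + y = 0 then 1 else 0) + quadraticChar F (x + y) := by
    intro x y
    rw [hD, Matrix.mul_apply]
    rw [Finset.sum_eq_single (-y)]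
    · rw [hR]
      simp only [Matrix.add_apply, Matrix.one_apply, hQ, neg_add_cancel, if_pos rfl, mul_one,
        sub_neg_eq_add]
      by_cases h : x + y = 0
      · have : x = -y := by linear_combination h
        simp [h, this]
      · have : ¬ x = -y := fun hc => h (by rw [hc]; ring)
        simp [h, this]
    · intro b _ hb
      rw [hR]
      have : ¬ b + y = 0 := fun hc => hb (by linear_combination hc)
      simp [this]
    · intro h; exact absurd (Finset.mem_univ _) h
  constructor
  · ext x y
    simp only [Matrix.transpose_apply, key, add_comm y x]
  · intro x y
    rw [key]
    by_cases h : x + y = 0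
    · left; simp [h]
    · rcases quadraticChar_dichotomy h with h1 | h1 <;> simp [h, h1]
end

section
/- Let q be a prime power with q ≡ 3 (mod 4), let Q be the Paley core matrix over F_q, let R be the permutation matrix of negation on F_q, and let D = (I + Q)·R. Then D·Dᵀ = (q + 1)·I − J, where J is the all-ones q × q matrix. -/
open Finset

private lemma paley_char_ne_two (q : ℕ) (hq4 : q % 4 = 3)
    (F : Type*) [Field F] [Fintype F] [DecidableEq F]
    (hF : Fintype.card F = q) : ringChar F ≠ 2 := by
  intro h
  have := FiniteField.even_card_of_char_two h
  rw [hF] at this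
  omega

private lemma paley_key_sum (F : Type*) [Field F] [Fintype F] [DecidableEq F]
    (h2 : ringChar F ≠ 2) (a : F) (ha : a ≠ 0) :
    ∑ z : F, quadraticChar F (a + z) * quadraticChar F z = -1 := by
  have h1 : ∑ z : F, quadraticChar F (a + z) * quadraticChar F z
      = ∑ z ∈ Finset.univ.erase (0:F), quadraticChar F (1 + a * z⁻¹) := by
    rw [← Finset.sum_erase (s := (Finset.univ : Finset F))
      (f := fun z : F => quadraticChar F (a + z) * quadraticChar F z) (a := (0:F)) (by simp)]
    apply Finset.sum_congr rfl
    intro z hz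
    have hz0 : z ≠ 0 := Finset.ne_of_mem_erase hz
    have hprod : (a + z) * z = (1 + a * z⁻¹) * (z * z) := by
      field_simp; ring
    rw [← map_mul, hprod, map_mul, map_mul]
    have : quadraticChar F z * quadraticChar F z = 1 := by
      have := quadraticChar_sq_one (F := F) hz0
      rwa [pow_two] at this
    rw [this, mul_one]
  rw [h1]
  have h3 : ∑ z ∈ Finset.univ.erase (0:F), quadraticChar F (1 + a * z⁻¹)
      = ∑ w ∈ Finset.univ.erase (1:F), quadraticChar F w := by
    apply Finset.sum_nbij' (fun z => 1 + a * z⁻¹) (fun w => a * (w - 1)⁻¹)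
    · intro z hz
      have hz0 : z ≠ 0 := Finset.ne_of_mem_erase hz
      simp only [Finset.mem_erase, Finset.mem_univ, and_true]
      intro h
      have : a * z⁻¹ = 0 := by linear_combination h
      simp [ha, hz0] at this
    · intro w hw
      have hw1 : w ≠ 1 := Finset.ne_of_mem_erase hw
      simp only [Finset.mem_erase, Finset.mem_univ, and_true]
      have : w - 1 ≠ 0 := sub_ne_zero.mpr hw1
      simp [ha, this]
    · intro z hz
      have hz0 : z ≠ 0 := Finset.ne_of_mem_erase hz
      field_simp
      simp [ha]
    · intro w hw
      have hw1 : w ≠ 1 := Finset.ne_of_mem_erase hw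
      have hws : w - 1 ≠ 0 := sub_ne_zero.mpr hw1
      field_simp
      ring
    · intro z hz; rfl
  rw [h3, Finset.sum_erase_eq_sub (Finset.mem_univ (1:F)),
    quadraticChar_sum_zero h2, map_one]
  ring

/-- For a prime power `q ≡ 3 (mod 4)`, with `Q` the Paley core matrix over
`F_q`, `R` the permutation matrix of negation on `F_q`, `D = (1 + Q) R`, and
`J` the all-ones matrix, one has `D Dᵀ = (q + 1) I - J`. -/
theorem paley_D_mul_transpose
    (q : ℕ) (hq : IsPrimePow q) (hq4 : q % 4 = 3)
    (F : Type*) [Field F] [Fintype F] [DecidableEq F]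
    (hF : Fintype.card F = q)
    (Q : Matrix F F ℤ) (hQ : ∀ x y : F, Q x y = quadraticChar F (x - y))
    (R : Matrix F F ℤ) (hR : ∀ x y : F, R x y = if x + y = 0 then 1 else 0)
    (D : Matrix F F ℤ) (hD : D = (1 + Q) * R)
    (J : Matrix F F ℤ) (hJ : ∀ x y : F, J x y = 1) :
    D * D.transpose = ((q : ℤ) + 1) • 1 - J := by
  have h2 : ringChar F ≠ 2 := paley_char_ne_two q hq4 F hF
  have hneg : quadraticChar F (-1) = -1 := by
    rw [quadraticChar_neg_one h2, hF]
    exact ZMod.χ₄_nat_three_mod_four hq4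
  have hnegmul : ∀ a : F, quadraticChar F (-a) = - quadraticChar F a := by
    intro a
    have : (-a) = (-1) * a := by ring
    rw [this, map_mul, hneg]; ring
  -- explicit formula for D
  have hD' : ∀ x z : F, D x z = (if x + z = 0 then 1 else 0) + quadraticChar F (x + z) := by
    intro x z
    rw [hD, Matrix.mul_apply]
    have : ∀ w : F, ((1 + Q) x w) * R w z = if w = -z then (1 + Q) x (-z) else 0 := by
      intro w
      rw [hR]
      by_cases h : w + z = 0
      · have : w = -z := by linear_combination h
        simp [this]
      · have : w ≠ -z := by intro hc; apply h; rw [hc]; ring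
        simp [h, this]
    simp only [this, Finset.sum_ite_eq', Finset.mem_univ, if_true]
    rw [Matrix.add_apply, Matrix.one_apply, hQ]
    have h1 : (x = -z) ↔ (x + z = 0) := by constructor <;> intro h <;> [skip; skip] <;>
      first | (rw [h]; ring) | linear_combination h
    have h2' : x - (-z) = x + z := by ring
    rw [h2']
    by_cases h : x + z = 0 <;> simp [h1, h]
  ext x y
  rw [Matrix.mul_apply]
  simp only [Matrix.transpose_apply, hD']
  have expand : ∀ z : F,
      ((if x + z = 0 then (1:ℤ) else 0) + quadraticChar F (x + z))
        * ((if y + z = 0 then 1 else 0) + quadraticChar F (y + z))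
      = (if x + z = 0 then (1:ℤ) else 0) * (if y + z = 0 then 1 else 0)
        + (if x + z = 0 then (1:ℤ) else 0) * quadraticChar F (y + z)
        + (if y + z = 0 then (1:ℤ) else 0) * quadraticChar F (x + z)
        + quadraticChar F (x + z) * quadraticChar F (y + z) := by
    intro z; ring
  rw [Finset.sum_congr rfl (fun z _ => expand z)]
  rw [Finset.sum_add_distrib, Finset.sum_add_distrib, Finset.sum_add_distrib]
  have s1 : ∑ z : F, (if x + z = 0 then (1:ℤ) else 0) * (if y + z = 0 then 1 else 0)
      = if x = y then 1 else 0 := by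
    have : ∀ z : F, (if x + z = 0 then (1:ℤ) else 0) * (if y + z = 0 then 1 else 0)
        = if z = -x then (if y + z = 0 then (1:ℤ) else 0) else 0 := by
      intro z
      by_cases h : x + z = 0
      · have : z = -x := by linear_combination h
        simp [h, this]
      · have : z ≠ -x := fun hc => h (by rw [hc]; ring)
        simp [h, this]
    simp only [this, Finset.sum_ite_eq', Finset.mem_univ, if_true]
    by_cases h : x = y
    · simp [h]
    · have : y + -x ≠ 0 := fun hc => h (by linear_combination -hc)
      simp [this, h]
  have s2 : ∑ z : F, (if x + z = 0 then (1:ℤ) else 0) * quadraticChar F (y + z)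
      = quadraticChar F (y - x) := by
    have : ∀ z : F, (if x + z = 0 then (1:ℤ) else 0) * quadraticChar F (y + z)
        = if z = -x then (quadraticChar F (y + z) : ℤ) else 0 := by
      intro z
      by_cases h : x + z = 0
      · have : z = -x := by linear_combination h
        simp [h, this]
      · have : z ≠ -x := fun hc => h (by rw [hc]; ring)
        simp [h, this]
    simp only [this, Finset.sum_ite_eq', Finset.mem_univ, if_true]
    congr 1; ring
  have s3 : ∑ z : F, (if y + z = 0 then (1:ℤ) else 0) * quadraticChar F (x + z)
      = quadraticChar F (x - y) := by
    have : ∀ z : F, (if y + z = 0 then (1:ℤ) else 0) * quadraticChar F (x + z)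
        = if z = -y then (quadraticChar F (x + z) : ℤ) else 0 := by
      intro z
      by_cases h : y + z = 0
      · have : z = -y := by linear_combination h
        simp [h, this]
      · have : z ≠ -y := fun hc => h (by rw [hc]; ring)
        simp [h, this]
    simp only [this, Finset.sum_ite_eq', Finset.mem_univ, if_true]
    congr 1; ring
  have s4 : ∑ z : F, (quadraticChar F (x + z) : ℤ) * quadraticChar F (y + z)
      = if x = y then (q : ℤ) - 1 else -1 := by
    by_cases h : x = y
    · subst h
      have : ∀ z : F, (quadraticChar F (x + z) : ℤ) * quadraticChar F (x + z)
          = if x + z = 0 then 0 else 1 := by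
        intro z
        by_cases hz : x + z = 0
        · simp [hz]
        · have := quadraticChar_sq_one (F := F) hz
          rw [pow_two] at this
          push_cast [this]
          simp [hz]
      simp only [this]
      rw [Finset.sum_ite, Finset.sum_const, Finset.sum_const]
      have hcard : (Finset.univ.filter (fun z : F => ¬ x + z = 0)).card = q - 1 := by
        have : (Finset.univ.filter (fun z : F => x + z = 0)).card = 1 := by
          rw [Finset.card_eq_one]
          refine ⟨-x, ?_⟩
          ext z
          simp only [Finset.mem_filter, Finset.mem_univ, true_and, Finset.mem_singleton]
          constructor
          · intro h; linear_combination h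
          · intro h; rw [h]; ring
        have h2' := Finset.card_filter_add_card_filter_not
          (s := (Finset.univ : Finset F)) (p := fun z : F => x + z = 0)
        rw [Finset.card_univ, hF] at h2'
        omega
      have hq1 : 1 ≤ q := by omega
      simp only [if_true, hcard, smul_zero, zero_add, nsmul_eq_mul, mul_one]
      push_cast [Nat.cast_sub hq1]
      ring
    · rw [if_neg h]
      have hxy : x - y ≠ 0 := sub_ne_zero.mpr h
      have key := paley_key_sum F h2 (x - y) hxy
      have : ∑ z : F, (quadraticChar F (x + z) : ℤ) * quadraticChar F (y + z)
          = ∑ w : F, (quadraticChar F ((x - y) + w) : ℤ) * quadraticChar F w :=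
        Fintype.sum_equiv (Equiv.addLeft y) _ _ (fun z => by
          simp only [Equiv.coe_addLeft]
          have h3 : x - y + (y + z) = x + z := by ring
          rw [h3])
      rw [this]
      exact key
  rw [s1, s2, s3, s4]
  have hsub : x - y = -(y - x) := by ring
  rw [hsub, hnegmul]
  rw [Matrix.sub_apply, Matrix.smul_apply, Matrix.one_apply, hJ]
  by_cases h : x = y
  · subst h
    simp
  · have h' : y ≠ x := fun hc => h hc.symm
    simp [h]
end

section
/- Let q be a prime power with q ≡ 3 (mod 4). Let A and B be (q+1) × (q+1) integer matrices such that A and B are symmetric, every row of A has exactly one nonzero entry and that entry is 1 or −1, every entry of B lies in {0, 1, −1} with B i j = 0 exactly when A i j ≠ 0, and A·Aᵀ = I, B·Bᵀ = q·I, A·Bᵀ + B·Aᵀ = 0. Let J be the all-ones q × q matrix and let D = (I + Q)·R, where Q is the Paley core matrix over F_q and R is the permutation matrix of negation on F_q. Then the Kronecker product matrix H = A ⊗ J + B ⊗ D is a symmetric Hadamard matrix of order q(q+1): all entries of H are 1 or −1, Hᵀ = H, and H·Hᵀ = q(q+1)·I. -/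
open Finset

lemma aux_shift_sum {F : Type*} [Field F] [Fintype F] [DecidableEq F]
    (hF2 : ringChar F ≠ 2) {a : F} (ha : a ≠ 0) :
    ∑ t : F, (quadraticChar F t : ℤ) * quadraticChar F (t + a) = -1 := by
  have key : ∑ t ∈ Finset.univ.erase (0:F), (quadraticChar F t : ℤ) * quadraticChar F (t + a)
      = ∑ u ∈ Finset.univ.erase (1:F), (quadraticChar F u : ℤ) := by
    refine Finset.sum_nbij' (fun t => 1 + a * t⁻¹) (fun u => a * (u - 1)⁻¹) ?_ ?_ ?_ ?_ ?_
    · intro t ht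
      have ht0 : t ≠ 0 := (Finset.mem_erase.mp ht).1
      simp only [Finset.mem_erase, Finset.mem_univ, and_true]
      intro h
      have h2 : a * t⁻¹ = 0 := by linear_combination h
      rcases mul_eq_zero.mp h2 with h3 | h3
      · exact ha h3
      · exact ht0 (inv_eq_zero.mp h3 ▸ rfl)
    · intro u hu
      have hu1 : u ≠ 1 := (Finset.mem_erase.mp hu).1
      simp only [Finset.mem_erase, Finset.mem_univ, and_true]
      exact mul_ne_zero ha (inv_ne_zero (sub_ne_zero.mpr hu1))
    · intro t ht
      have ht0 : t ≠ 0 := (Finset.mem_erase.mp ht).1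
      field_simp
      simp [ha]
    · intro u hu
      have hu1 : u ≠ 1 := (Finset.mem_erase.mp hu).1
      have h2 : u - 1 ≠ 0 := sub_ne_zero.mpr hu1
      field_simp
      ring
    · intro t ht
      have ht0 : t ≠ 0 := (Finset.mem_erase.mp ht).1
      have harg : t + a = t * (1 + a * t⁻¹) := by field_simp
      rw [harg, map_mul, ← mul_assoc, ← sq, quadraticChar_sq_one ht0, one_mul]
  have h0 : ∑ t : F, (quadraticChar F t : ℤ) * quadraticChar F (t + a)
      = ∑ t ∈ Finset.univ.erase (0:F), (quadraticChar F t : ℤ) * quadraticChar F (t + a) := by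
    rw [Finset.sum_erase]
    simp
  have h1 : ∑ u ∈ Finset.univ.erase (1:F), (quadraticChar F u : ℤ)
      = (∑ u : F, (quadraticChar F u : ℤ)) - quadraticChar F 1 := by
    rw [Finset.sum_erase_eq_sub (Finset.mem_univ 1)]
  rw [h0, key, h1, quadraticChar_sum_zero hF2, map_one]
  ring

open Kronecker in
/-- Blowing up a symmetric orthogonal design `OD(1+q; 1, q)` (with coefficient
matrices `A`, `B`) by the all-ones matrix `J` and the matrix `D = (I + Q) R`
built from the Paley core over `F_q` (for `q ≡ 3 (mod 4)` a prime power)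
yields a symmetric Hadamard matrix `H = A ⊗ J + B ⊗ D` of order `q(q+1)`. -/
theorem symmetric_hadamard_from_design_blowup
    (q : ℕ) (hq : IsPrimePow q) (hq4 : q % 4 = 3)
    (A B : Matrix (Fin (q + 1)) (Fin (q + 1)) ℤ)
    (hAsymm : A.IsSymm) (hBsymm : B.IsSymm)
    (hArow : ∀ i, ∃! j, A i j ≠ 0)
    (hAent : ∀ i j, A i j = 0 ∨ A i j = 1 ∨ A i j = -1)
    (hBent : ∀ i j, B i j = 0 ∨ B i j = 1 ∨ B i j = -1)
    (hsupp : ∀ i j, B i j = 0 ↔ A i j ≠ 0)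
    (hAA : A * A.transpose = 1)
    (hBB : B * B.transpose = (q : ℤ) • 1)
    (hAB : A * B.transpose + B * A.transpose = 0)
    (F : Type*) [Field F] [Fintype F] [DecidableEq F]
    (hF : Fintype.card F = q)
    (Q : Matrix F F ℤ) (hQ : ∀ x y : F, Q x y = quadraticChar F (x - y))
    (R : Matrix F F ℤ) (hR : ∀ x y : F, R x y = if x + y = 0 then 1 else 0)
    (D : Matrix F F ℤ) (hD : D = (1 + Q) * R)
    (J : Matrix F F ℤ) (hJ : ∀ x y : F, J x y = 1)
    (H : Matrix (Fin (q + 1) × F) (Fin (q + 1) × F) ℤ)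
    (hH : H = A ⊗ₖ J + B ⊗ₖ D) :
    (∀ i j, H i j = 1 ∨ H i j = -1) ∧
    H.transpose = H ∧
    H * H.transpose = ((q * (q + 1) : ℕ) : ℤ) • 1 := by
  classical
  have hA' : A.transpose = A := hAsymm
  have hB' : B.transpose = B := hBsymm
  have hchar2 : ringChar F ≠ 2 := by
    intro h
    have h2 := FiniteField.even_card_of_char_two h
    rw [hF] at h2; omega
  have hχneg1 : (quadraticChar F) (-1 : F) = -1 := by
    rw [quadraticChar_neg_one hchar2, hF]
    exact ZMod.χ₄_nat_three_mod_four hq4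
  -- multiplication by R
  have hmulR : ∀ (M : Matrix F F ℤ) (x y : F), (M * R) x y = M x (-y) := by
    intro M x y
    have h2 : ∀ z : F, R z y = if z = -y then 1 else 0 := by
      intro z; rw [hR]
      by_cases h : z = -y
      · rw [if_pos h, if_pos (by rw [h]; ring)]
      · rw [if_neg h, if_neg (fun hz => h (eq_neg_of_add_eq_zero_left hz))]
    simp [Matrix.mul_apply, h2, mul_ite, mul_one, mul_zero, Finset.sum_ite_eq']
  have hRmul : ∀ (M : Matrix F F ℤ) (x y : F), (R * M) x y = M (-x) y := by
    intro M x y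
    have h2 : ∀ z : F, R x z = if z = -x then 1 else 0 := by
      intro z; rw [hR]
      by_cases h : z = -x
      · rw [if_pos h, if_pos (by rw [h]; ring)]
      · rw [if_neg h, if_neg (fun hz => h (eq_neg_of_add_eq_zero_right hz))]
    simp [Matrix.mul_apply, h2, ite_mul, one_mul, zero_mul, Finset.sum_ite_eq']
  have hJsymm : J.transpose = J := by
    ext x y; rw [Matrix.transpose_apply, hJ, hJ]
  have hRJ : R * J = J := by
    ext x y; rw [hRmul, hJ, hJ]
  have hJR : J * R = J := by
    ext x y; rw [hmulR, hJ, hJ]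
  have hRR : R * R = 1 := by
    ext x y; rw [hmulR, hR, Matrix.one_apply]
    simp [add_neg_eq_zero]
  have hQJ : Q * J = 0 := by
    ext x y
    rw [Matrix.mul_apply, Matrix.zero_apply]
    simp only [hQ, hJ, mul_one]
    have h2 := Equiv.sum_comp (Equiv.subLeft x) (fun z => (quadraticChar F z : ℤ))
    simp only [Equiv.subLeft_apply] at h2
    rw [h2, quadraticChar_sum_zero hchar2]
  have hJQ : J * Q = 0 := by
    ext x y
    rw [Matrix.mul_apply, Matrix.zero_apply]
    simp only [hQ, hJ, one_mul]
    have h2 := Equiv.sum_comp (Equiv.subRight y) (fun z => (quadraticChar F z : ℤ))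
    simp only [Equiv.subRight_apply] at h2
    rw [h2, quadraticChar_sum_zero hchar2]
  have hJJ : J * J = (q:ℤ) • J := by
    ext x y
    rw [Matrix.mul_apply, Matrix.smul_apply]
    simp [hJ, Finset.card_univ, hF]
  have hRQ : R * Q = -(Q * R) := by
    ext x y
    rw [Matrix.neg_apply, hRmul, hmulR, hQ, hQ]
    have h2 : -x - y = (-1 : F) * (x - -y) := by ring
    rw [h2, map_mul, hχneg1]
    ring
  have hQQt : Q * Q.transpose = (q:ℤ) • 1 - J := by
    ext x y
    rw [Matrix.mul_apply]
    simp only [Matrix.transpose_apply, hQ]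
    have reidx : ∑ z : F, (quadraticChar F (x - z) : ℤ) * quadraticChar F (y - z)
        = ∑ t : F, (quadraticChar F t : ℤ) * quadraticChar F (t + (y - x)) := by
      rw [← Equiv.sum_comp (Equiv.subLeft x)
        (fun t => (quadraticChar F t : ℤ) * quadraticChar F (t + (y - x)))]
      refine Finset.sum_congr rfl fun z _ => ?_
      simp only [Equiv.subLeft_apply]
      rw [show y - z = x - z + (y - x) by ring]
    rw [reidx]
    by_cases hxy : x = y
    · subst hxy
      simp only [sub_self, add_zero]
      have h2 : ∀ t : F, (quadraticChar F t : ℤ) * quadraticChar F t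
          = if t = 0 then 0 else 1 := by
        intro t; by_cases ht : t = 0
        · simp [ht]
        · rw [if_neg ht, ← sq, quadraticChar_sq_one ht]
      rw [Finset.sum_congr rfl (fun t _ => h2 t)]
      rw [Matrix.sub_apply, Matrix.smul_apply, Matrix.one_apply_eq, hJ, smul_eq_mul, mul_one]
      have h4 : ∀ t : F, (if t = 0 then (0:ℤ) else 1) = 1 - (if t = 0 then 1 else 0) := by
        intro t; by_cases ht : t = 0 <;> simp [ht]
      rw [Finset.sum_congr rfl fun t _ => h4 t, Finset.sum_sub_distrib,
        Finset.sum_ite_eq' Finset.univ (0:F) (fun _ => (1:ℤ))]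
      simp [Finset.card_univ, hF]
    · have ha : y - x ≠ 0 := sub_ne_zero.mpr (Ne.symm hxy)
      rw [aux_shift_sum hchar2 ha, Matrix.sub_apply, Matrix.smul_apply,
        Matrix.one_apply_ne hxy, hJ, smul_eq_mul]
      ring
  have hQt : Q.transpose = -Q := by
    ext x y
    rw [Matrix.transpose_apply, Matrix.neg_apply, hQ, hQ]
    have h2 : y - x = (-1 : F) * (x - y) := by ring
    rw [h2, map_mul, hχneg1]
    ring
  have hQQ : Q * Q = J - (q:ℤ) • 1 := by
    have h3 : Q * (-Q) = (q:ℤ) • 1 - J := by rw [← hQt]; exact hQQt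
    rw [Matrix.mul_neg] at h3
    have h4 : Q * Q = -((q:ℤ) • 1 - J) := by rw [← h3, neg_neg]
    rw [h4, neg_sub]
  -- facts about D
  have hDt : D.transpose = D := by
    ext x y
    rw [Matrix.transpose_apply, hD, hmulR, hmulR]
    simp only [Matrix.add_apply, Matrix.one_apply, hQ, sub_neg_eq_add]
    by_cases h : x = -y
    · rw [if_pos h, if_pos (by rw [h, neg_neg]), add_comm y x]
    · rw [if_neg h, if_neg (fun h2 => h (by rw [h2, neg_neg])), add_comm y x]
  have hDent : ∀ x y : F, D x y = (if x = -y then 1 else 0) + (quadraticChar F (x + y) : ℤ) := by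
    intro x y
    rw [hD, hmulR]
    simp [Matrix.add_apply, Matrix.one_apply, hQ, sub_neg_eq_add]
  have hDpm : ∀ x y : F, D x y = 1 ∨ D x y = -1 := by
    intro x y
    rw [hDent]
    by_cases h : x = -y
    · left
      rw [if_pos h, h]
      simp
    · rw [if_neg h, zero_add]
      exact_mod_cast quadraticChar_dichotomy (fun h0 => h (eq_neg_of_add_eq_zero_left h0))
  have hDJ : D * J = J := by
    rw [hD, Matrix.mul_assoc, hRJ, Matrix.add_mul, Matrix.one_mul, hQJ, add_zero]
  have hJD : J * D = J := by
    rw [hD, ← Matrix.mul_assoc, Matrix.mul_add, Matrix.mul_one, hJQ, add_zero, hJR]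
  have hDD : D * D = ((q:ℤ) + 1) • (1 : Matrix F F ℤ) + (-1 : ℤ) • J := by
    have e1 : R * (1 + Q) = (1 - Q) * R := by
      rw [Matrix.mul_add, Matrix.mul_one, hRQ, Matrix.sub_mul, Matrix.one_mul, sub_eq_add_neg]
    calc D * D = (1 + Q) * ((R * (1 + Q)) * R) := by
          rw [hD, Matrix.mul_assoc, Matrix.mul_assoc]
      _ = (1 + Q) * ((1 - Q) * (R * R)) := by rw [e1, Matrix.mul_assoc]
      _ = (1 + Q) * (1 - Q) := by rw [hRR, Matrix.mul_one]
      _ = 1 - Q * Q := by noncomm_ring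
      _ = ((q:ℤ) + 1) • (1 : Matrix F F ℤ) + (-1 : ℤ) • J := by
          rw [hQQ]; module
  -- symmetric versions of the design equations
  have hAA' : A * A = 1 := by
    calc A * A = A * A.transpose := by rw [hA']
      _ = 1 := hAA
  have hBB' : B * B = (q:ℤ) • 1 := by
    calc B * B = B * B.transpose := by rw [hB']
      _ = (q:ℤ) • 1 := hBB
  have hAB' : A * B + B * A = 0 := by
    calc A * B + B * A = A * B.transpose + B * A.transpose := by rw [hA', hB']
      _ = 0 := hAB
  -- symmetry of H
  have hHsymm : H.transpose = H := by
    rw [hH, Matrix.transpose_add, ← Matrix.kroneckerMap_transpose, ← Matrix.kroneckerMap_transpose,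
      hA', hB', hJsymm, hDt]
  refine ⟨?_, hHsymm, ?_⟩
  · rintro ⟨i1, x⟩ ⟨j1, y⟩
    rw [hH]
    simp only [Matrix.add_apply, Matrix.kroneckerMap_apply, hJ, mul_one]
    rcases hAent i1 j1 with hA0 | hA0 | hA0
    · have hBne : B i1 j1 ≠ 0 := fun hB0 => ((hsupp i1 j1).mp hB0) hA0
      rcases hBent i1 j1 with hB0 | hB0 | hB0
      · exact absurd hB0 hBne
      · rcases hDpm x y with hDxy | hDxy <;> rw [hA0, hB0, hDxy] <;> norm_num
      · rcases hDpm x y with hDxy | hDxy <;> rw [hA0, hB0, hDxy] <;> norm_num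
    · have hB0 : B i1 j1 = 0 := (hsupp i1 j1).mpr (by rw [hA0]; norm_num)
      left; rw [hA0, hB0]; ring
    · have hB0 : B i1 j1 = 0 := (hsupp i1 j1).mpr (by rw [hA0]; norm_num)
      right; rw [hA0, hB0]; ring
  · rw [hHsymm, hH]
    have e : (A ⊗ₖ J + B ⊗ₖ D) * (A ⊗ₖ J + B ⊗ₖ D)
        = (A * A) ⊗ₖ (J * J) + ((A * B + B * A) ⊗ₖ J + (B * B) ⊗ₖ (D * D)) := by
      rw [Matrix.add_mul, Matrix.mul_add, Matrix.mul_add, ← Matrix.mul_kronecker_mul,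
        ← Matrix.mul_kronecker_mul, ← Matrix.mul_kronecker_mul, ← Matrix.mul_kronecker_mul,
        hJD, hDJ, Matrix.add_kronecker]
      abel
    rw [e, hAA', hAB', hBB', hJJ, hDD, Matrix.zero_kronecker, Matrix.kronecker_smul,
      Matrix.kronecker_add, Matrix.kronecker_smul, Matrix.kronecker_smul,
      Matrix.smul_kronecker, Matrix.smul_kronecker, Matrix.one_kronecker_one]
    have hc : ((q * (q + 1) : ℕ) : ℤ) = (q : ℤ) * ((q : ℤ) + 1) := by push_cast; ring
    rw [hc]
    module
end

section
/- There exists a symmetric Hadamard matrix of order 756 (= 27·28 = 4·189) and there exists a symmetric Hadamard matrix of order 1892 (= 43·44 = 4·473). -/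
open Finset Matrix
set_option linter.unusedSectionVars false
set_option linter.unusedVariables false

namespace SymHad

variable {F : Type} [AddCommGroup F] [Fintype F] [DecidableEq F]

def psi (χ : F → ℤ) (x : F) : ℤ := if x = 0 then 1 else χ x

def dlt (x : F) : ℤ := if x = 0 then 1 else 0

def had (χ : F → ℤ) : Matrix (Option F × F) (Option F × F) ℤ :=
  fun p q =>
    match p, q with
    | (none, _), (none, _) => 1
    | (none, a), (some _, b) => psi χ (a + b)
    | (some _, a), (none, b) => psi χ (a + b)
    | (some i, a), (some j, b) => χ (i + j) * psi χ (a + b) - dlt (i + j)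

variable {χ : F → ℤ}

lemma psi_pm (h0 : χ 0 = 0) (h1 : ∀ x, x ≠ 0 → χ x = 1 ∨ χ x = -1) (t : F) :
    psi χ t = 1 ∨ psi χ t = -1 := by
  unfold psi; split
  · exact Or.inl rfl
  · exact h1 t (by assumption)

lemma psi_eq (h0 : χ 0 = 0) (t : F) : psi χ t = χ t + dlt t := by
  unfold psi dlt; split <;> simp [h0, *]

lemma had_entries (h0 : χ 0 = 0) (h1 : ∀ x, x ≠ 0 → χ x = 1 ∨ χ x = -1)
    (p q : Option F × F) : had χ p q = 1 ∨ had χ p q = -1 := by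
  obtain ⟨x, a⟩ := p; obtain ⟨y, b⟩ := q
  match x, y with
  | none, none => exact Or.inl rfl
  | none, some j => exact psi_pm h0 h1 (a + b)
  | some i, none => exact psi_pm h0 h1 (a + b)
  | some i, some j =>
      have : had χ (some i, a) (some j, b) = χ (i + j) * psi χ (a + b) - dlt (i + j) := rfl
      rw [this]
      unfold dlt; split
      · right; rw [(by assumption : i + j = 0), h0]; ring
      · rcases h1 (i + j) (by assumption) with h | h <;>
          rcases psi_pm h0 h1 (a + b) with h' | h' <;> rw [h, h'] <;> simp

lemma had_symm : (had χ)ᵀ = had χ := by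
  ext ⟨x, a⟩ ⟨y, b⟩
  show had χ (y, b) (x, a) = had χ (x, a) (y, b)
  match x, y with
  | none, none => rfl
  | none, some j => show psi χ (b + a) = psi χ (a + b); rw [add_comm]
  | some i, none => show psi χ (b + a) = psi χ (a + b); rw [add_comm]
  | some i, some j =>
      show χ (j + i) * psi χ (b + a) - dlt (j + i) = χ (i + j) * psi χ (a + b) - dlt (i + j)
      rw [add_comm j i, add_comm b a]

lemma sum_shift (f : F → ℤ) (a : F) : ∑ b, f (a + b) = ∑ b, f b := by
  have := Equiv.sum_comp (Equiv.addLeft a) f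
  simpa using this

lemma sum_dlt : ∑ b : F, dlt b = 1 := by
  unfold dlt
  rw [Finset.sum_ite_eq' univ (0 : F) (fun _ => (1:ℤ))]; simp

lemma sum_psi (h0 : χ 0 = 0) (hsum : ∑ x, χ x = 0) : ∑ b : F, psi χ b = 1 := by
  rw [Finset.sum_congr rfl (fun b _ => psi_eq h0 b), Finset.sum_add_distrib, hsum, sum_dlt]; ring

lemma sum_psi' (h0 : χ 0 = 0) (hsum : ∑ x, χ x = 0) (a : F) : ∑ b : F, psi χ (a + b) = 1 := by
  rw [sum_shift (psi χ) a, sum_psi h0 hsum]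

lemma sum_chi' (hsum : ∑ x, χ x = 0) (i : F) : ∑ j : F, χ (i + j) = 0 := by
  rw [sum_shift χ i, hsum]

lemma sum_dlt' (i : F) : ∑ j : F, dlt (i + j) = 1 := by
  rw [sum_shift dlt i, sum_dlt]

lemma sum_chi_mul (h0 : χ 0 = 0) (h1 : ∀ x, x ≠ 0 → χ x = 1 ∨ χ x = -1)
    (hconv : ∀ c, c ≠ 0 → ∑ x, χ x * χ (x + c) = -1) (c : F) :
    ∑ b : F, χ b * χ (b + c) = if c = 0 then (Fintype.card F : ℤ) - 1 else -1 := by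
  split
  · subst ‹c = 0›
    have e : ∀ b : F, χ b * χ (b + 0) = 1 - dlt b := by
      intro b
      rw [add_zero]
      unfold dlt; split
      · simp [h0, *]
      · rcases h1 b (by assumption) with h | h <;> rw [h] <;> ring
    rw [Finset.sum_congr rfl (fun b _ => e b), Finset.sum_sub_distrib, sum_dlt,
      Finset.sum_const, card_univ]
    simp
  · exact hconv c (by assumption)

lemma sum_psi_mul (h0 : χ 0 = 0) (h1 : ∀ x, x ≠ 0 → χ x = 1 ∨ χ x = -1)
    (hneg : ∀ x, χ (-x) = -χ x)
    (hconv : ∀ c, c ≠ 0 → ∑ x, χ x * χ (x + c) = -1) (c : F) :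
    ∑ b : F, psi χ b * psi χ (b + c) = if c = 0 then (Fintype.card F : ℤ) else -1 := by
  have e : ∀ b : F, psi χ b * psi χ (b + c)
      = χ b * χ (b + c) + χ b * dlt (b + c) + dlt b * χ (b + c) + dlt b * dlt (b + c) := by
    intro b; rw [psi_eq h0, psi_eq h0]; ring
  rw [Finset.sum_congr rfl (fun b _ => e b), Finset.sum_add_distrib, Finset.sum_add_distrib,
    Finset.sum_add_distrib]
  have e1 : ∑ b : F, χ b * dlt (b + c) = -χ c := by
    have h : ∀ b : F, χ b * dlt (b + c) = if b = -c then χ (-c) else 0 := by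
      intro b; unfold dlt
      by_cases hb : b + c = 0
      · have hj : b = -c := by linear_combination (norm := abel) hb
        simp [hb, hj]
      · have : ¬ b = -c := fun h => hb (by rw [h]; abel)
        simp [hb, this]
    rw [Finset.sum_congr rfl (fun b _ => h b),
      Finset.sum_ite_eq' univ (-c) (fun _ => χ (-c))]
    simp [hneg c]
  have e2 : ∑ b : F, dlt b * χ (b + c) = χ c := by
    have h : ∀ b : F, dlt b * χ (b + c) = if b = 0 then χ (b + c) else 0 := by
      intro b; unfold dlt; split <;> simp
    rw [Finset.sum_congr rfl (fun b _ => h b),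
      Finset.sum_ite_eq' univ (0 : F) (fun b => χ (b + c))]
    simp
  have e3 : ∑ b : F, dlt b * dlt (b + c) = dlt c := by
    have h : ∀ b : F, dlt b * dlt (b + c) = if b = 0 then dlt (b + c) else 0 := by
      intro b; unfold dlt; split <;> simp
    rw [Finset.sum_congr rfl (fun b _ => h b),
      Finset.sum_ite_eq' univ (0 : F) (fun b => dlt (b + c))]
    simp
  rw [e1, e2, e3, sum_chi_mul h0 h1 hconv]
  unfold dlt; split <;> ring

lemma sum_psi_mul' (h0 : χ 0 = 0) (h1 : ∀ x, x ≠ 0 → χ x = 1 ∨ χ x = -1)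
    (hneg : ∀ x, χ (-x) = -χ x)
    (hconv : ∀ c, c ≠ 0 → ∑ x, χ x * χ (x + c) = -1) (a₁ a₂ : F) :
    ∑ b : F, psi χ (a₁ + b) * psi χ (a₂ + b)
      = if a₁ = a₂ then (Fintype.card F : ℤ) else -1 := by
  have e : ∀ b : F, psi χ (a₁ + b) * psi χ (a₂ + b)
      = (fun t => psi χ t * psi χ (t + (a₂ - a₁))) (a₁ + b) := by
    intro b
    have h : a₁ + b + (a₂ - a₁) = a₂ + b := by abel
    simp only [h]
  rw [Finset.sum_congr rfl (fun b _ => e b),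
    sum_shift (fun t => psi χ t * psi χ (t + (a₂ - a₁))) a₁,
    sum_psi_mul h0 h1 hneg hconv]
  congr 1
  simp [sub_eq_zero, eq_comm]

lemma sum_chi_mul' (h0 : χ 0 = 0) (h1 : ∀ x, x ≠ 0 → χ x = 1 ∨ χ x = -1)
    (hconv : ∀ c, c ≠ 0 → ∑ x, χ x * χ (x + c) = -1) (i₁ i₂ : F) :
    ∑ j : F, χ (i₁ + j) * χ (i₂ + j)
      = if i₁ = i₂ then (Fintype.card F : ℤ) - 1 else -1 := by
  have e : ∀ j : F, χ (i₁ + j) * χ (i₂ + j)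
      = (fun t => χ t * χ (t + (i₂ - i₁))) (i₁ + j) := by
    intro j
    have h : i₁ + j + (i₂ - i₁) = i₂ + j := by abel
    simp only [h]
  rw [Finset.sum_congr rfl (fun j _ => e j),
    sum_shift (fun t => χ t * χ (t + (i₂ - i₁))) i₁,
    sum_chi_mul h0 h1 hconv]
  congr 1
  simp [sub_eq_zero, eq_comm]

lemma sum_chi_dlt (i₁ i₂ : F) :
    ∑ j : F, χ (i₁ + j) * dlt (i₂ + j) = χ (i₁ - i₂) := by
  have e : ∀ j : F, χ (i₁ + j) * dlt (i₂ + j) = if j = -i₂ then χ (i₁ - i₂) else 0 := by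
    intro j; unfold dlt
    by_cases hb : i₂ + j = 0
    · have hj : j = -i₂ := by linear_combination (norm := abel) hb
      have h2 : i₁ + j = i₁ - i₂ := by rw [hj]; abel
      rw [if_pos hb, if_pos hj, h2, mul_one]
    · have : ¬ j = -i₂ := fun h => hb (by rw [h]; abel)
      simp [hb, this]
  rw [Finset.sum_congr rfl (fun j _ => e j),
    Finset.sum_ite_eq' univ (-i₂) (fun _ => χ (i₁ - i₂))]
  simp

lemma sum_dlt_dlt (i₁ i₂ : F) :
    ∑ j : F, dlt (i₁ + j) * dlt (i₂ + j) = if i₁ = i₂ then 1 else 0 := by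
  have e : ∀ j : F, dlt (i₁ + j) * dlt (i₂ + j) = if j = -i₂ then dlt (i₁ - i₂) else 0 := by
    intro j; unfold dlt
    by_cases hb : i₂ + j = 0
    · have hj : j = -i₂ := by linear_combination (norm := abel) hb
      have h2 : i₁ + j = i₁ - i₂ := by rw [hj]; abel
      rw [if_pos hb, if_pos hj, h2, mul_one]
    · have : ¬ j = -i₂ := fun h => hb (by rw [h]; abel)
      simp [hb, this]
  rw [Finset.sum_congr rfl (fun j _ => e j),
    Finset.sum_ite_eq' univ (-i₂) (fun _ => dlt (i₁ - i₂))]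
  unfold dlt
  simp [sub_eq_zero, eq_comm]


lemma had_nn (a b : F) : had χ (none, a) (none, b) = 1 := rfl
lemma had_ns (a : F) (j : F) (b : F) : had χ (none, a) (some j, b) = psi χ (a + b) := rfl
lemma had_sn (i : F) (a b : F) : had χ (some i, a) (none, b) = psi χ (a + b) := rfl
lemma had_ss (i a j b : F) :
    had χ (some i, a) (some j, b) = χ (i + j) * psi χ (a + b) - dlt (i + j) := rfl

lemma sum_dlt_chi (i₁ i₂ : F) :
    ∑ j : F, dlt (i₁ + j) * χ (i₂ + j) = χ (i₂ - i₁) := by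
  rw [Finset.sum_congr rfl (fun j _ => mul_comm (dlt (i₁ + j)) (χ (i₂ + j))),
    sum_chi_dlt i₂ i₁]

lemma key (h0 : χ 0 = 0) (h1 : ∀ x, x ≠ 0 → χ x = 1 ∨ χ x = -1)
    (hneg : ∀ x, χ (-x) = -χ x) (hsum : ∑ x, χ x = 0)
    (hconv : ∀ c, c ≠ 0 → ∑ x, χ x * χ (x + c) = -1) (p q : Option F × F) :
    ∑ w, had χ p w * had χ q w
      = if p = q then (Fintype.card F : ℤ) * ((Fintype.card F : ℤ) + 1) else 0 := by
  obtain ⟨x₁, a₁⟩ := p; obtain ⟨x₂, a₂⟩ := q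
  rw [Fintype.sum_prod_type, Fintype.sum_option]
  set T : ℤ := if a₁ = a₂ then (Fintype.card F : ℤ) else -1 with hT
  match x₁, x₂ with
  | none, none =>
      have e1 : ∑ b : F, had χ (none, a₁) (none, b) * had χ (none, a₂) (none, b)
          = (Fintype.card F : ℤ) := by
        simp [had_nn, Finset.card_univ]
      have e2 : ∀ j : F, ∑ b : F, had χ (none, a₁) (some j, b) * had χ (none, a₂) (some j, b)
          = T := by
        intro j
        simp only [had_ns]
        rw [sum_psi_mul' h0 h1 hneg hconv]
      rw [e1, Finset.sum_congr rfl (fun j _ => e2 j), Finset.sum_const, Finset.card_univ]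
      by_cases ha : a₁ = a₂ <;> simp [ha, hT, Prod.ext_iff] <;> ring
  | none, some i₂ =>
      have e1 : ∑ b : F, had χ (none, a₁) (none, b) * had χ (some i₂, a₂) (none, b)
          = 1 := by
        simp only [had_nn, had_sn, one_mul]
        exact sum_psi' h0 hsum a₂
      have e2 : ∀ j : F,
          ∑ b : F, had χ (none, a₁) (some j, b) * had χ (some i₂, a₂) (some j, b)
          = χ (i₂ + j) * T - dlt (i₂ + j) := by
        intro j
        simp only [had_ns, had_ss]
        have pt : ∀ b : F, psi χ (a₁ + b) * (χ (i₂ + j) * psi χ (a₂ + b) - dlt (i₂ + j))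
            = χ (i₂ + j) * (psi χ (a₁ + b) * psi χ (a₂ + b)) - dlt (i₂ + j) * psi χ (a₁ + b) := by
          intro b; ring
        rw [Finset.sum_congr rfl (fun b _ => pt b), Finset.sum_sub_distrib,
          ← Finset.mul_sum, ← Finset.mul_sum, sum_psi_mul' h0 h1 hneg hconv,
          sum_psi' h0 hsum a₁, mul_one]
      rw [e1, Finset.sum_congr rfl (fun j _ => e2 j), Finset.sum_sub_distrib,
        ← Finset.sum_mul, sum_chi' hsum, sum_dlt', zero_mul]
      simp
  | some i₁, none =>
      have e1 : ∑ b : F, had χ (some i₁, a₁) (none, b) * had χ (none, a₂) (none, b)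
          = 1 := by
        simp only [had_nn, had_sn, mul_one]
        exact sum_psi' h0 hsum a₁
      have e2 : ∀ j : F,
          ∑ b : F, had χ (some i₁, a₁) (some j, b) * had χ (none, a₂) (some j, b)
          = χ (i₁ + j) * T - dlt (i₁ + j) := by
        intro j
        simp only [had_ns, had_ss]
        have pt : ∀ b : F, (χ (i₁ + j) * psi χ (a₁ + b) - dlt (i₁ + j)) * psi χ (a₂ + b)
            = χ (i₁ + j) * (psi χ (a₁ + b) * psi χ (a₂ + b)) - dlt (i₁ + j) * psi χ (a₂ + b) := by
          intro b; ring
        rw [Finset.sum_congr rfl (fun b _ => pt b), Finset.sum_sub_distrib,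
          ← Finset.mul_sum, ← Finset.mul_sum, sum_psi_mul' h0 h1 hneg hconv,
          sum_psi' h0 hsum a₂, mul_one]
      rw [e1, Finset.sum_congr rfl (fun j _ => e2 j), Finset.sum_sub_distrib,
        ← Finset.sum_mul, sum_chi' hsum, sum_dlt', zero_mul]
      simp
  | some i₁, some i₂ =>
      have e1 : ∑ b : F, had χ (some i₁, a₁) (none, b) * had χ (some i₂, a₂) (none, b)
          = T := by
        simp only [had_sn]
        rw [sum_psi_mul' h0 h1 hneg hconv]
      have e2 : ∀ j : F,
          ∑ b : F, had χ (some i₁, a₁) (some j, b) * had χ (some i₂, a₂) (some j, b)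
          = χ (i₁ + j) * χ (i₂ + j) * T - χ (i₁ + j) * dlt (i₂ + j)
            - dlt (i₁ + j) * χ (i₂ + j) + dlt (i₁ + j) * dlt (i₂ + j) * (Fintype.card F : ℤ) := by
        intro j
        simp only [had_ss]
        have pt : ∀ b : F,
            (χ (i₁ + j) * psi χ (a₁ + b) - dlt (i₁ + j))
              * (χ (i₂ + j) * psi χ (a₂ + b) - dlt (i₂ + j))
            = χ (i₁ + j) * χ (i₂ + j) * (psi χ (a₁ + b) * psi χ (a₂ + b))
              - (χ (i₁ + j) * dlt (i₂ + j)) * psi χ (a₁ + b)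
              - (dlt (i₁ + j) * χ (i₂ + j)) * psi χ (a₂ + b)
              + dlt (i₁ + j) * dlt (i₂ + j) := by
          intro b; ring
        rw [Finset.sum_congr rfl (fun b _ => pt b), Finset.sum_add_distrib,
          Finset.sum_sub_distrib, Finset.sum_sub_distrib,
          ← Finset.mul_sum, ← Finset.mul_sum, ← Finset.mul_sum,
          sum_psi_mul' h0 h1 hneg hconv, sum_psi' h0 hsum a₁, sum_psi' h0 hsum a₂,
          Finset.sum_const, Finset.card_univ]
        push_cast
        ring
      rw [e1, Finset.sum_congr rfl (fun j _ => e2 j), Finset.sum_add_distrib,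
        Finset.sum_sub_distrib, Finset.sum_sub_distrib,
        ← Finset.sum_mul, ← Finset.sum_mul,
        sum_chi_mul' h0 h1 hconv, sum_chi_dlt, sum_dlt_chi, sum_dlt_dlt]
      have hx : χ (i₂ - i₁) = -χ (i₁ - i₂) := by rw [← neg_sub i₁ i₂, hneg]
      by_cases hi : i₁ = i₂ <;> by_cases ha : a₁ = a₂ <;>
        simp [hi, ha, hT, Prod.ext_iff, hx, sub_self, h0] <;> ring

theorem generic (h0 : χ 0 = 0) (h1 : ∀ x, x ≠ 0 → χ x = 1 ∨ χ x = -1)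
    (hneg : ∀ x, χ (-x) = -χ x) (hsum : ∑ x, χ x = 0)
    (hconv : ∀ c, c ≠ 0 → ∑ x, χ x * χ (x + c) = -1) :
    (∀ p q, had χ p q = 1 ∨ had χ p q = -1) ∧ (had χ)ᵀ = had χ ∧
      had χ * (had χ)ᵀ
        = (((Fintype.card F : ℤ) * ((Fintype.card F : ℤ) + 1)) • 1) := by
  refine ⟨had_entries h0 h1, had_symm, ?_⟩
  rw [had_symm]
  ext p q
  rw [Matrix.mul_apply, Matrix.smul_apply, Matrix.one_apply]
  have := key h0 h1 hneg hsum hconv p q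
  have e : ∀ w, had χ p w * had χ q w = had χ p w * had χ w q := by
    intro w; rw [← Matrix.transpose_apply (had χ) w q, had_symm]
  rw [Finset.sum_congr rfl (fun w _ => (e w).symm), this]
  split <;> simp

end SymHad

open Matrix

abbrev F27 := ZMod 3 × ZMod 3 × ZMod 3

def idx27 (u : F27) : ℕ := u.1.val + 3 * u.2.1.val + 9 * u.2.2.val

def chi27 (u : F27) : ℤ :=
  if u = 0 then 0 else if Nat.testBit 38910522 (idx27 u) then 1 else -1

def chi43 (u : ZMod 43) : ℤ :=
  if u = 0 then 0 else if Nat.testBit 3678700564050 u.val then 1 else -1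

namespace SymHad

theorem build {F : Type} [AddCommGroup F] [Fintype F] [DecidableEq F] {χ : F → ℤ}
    (h0 : χ 0 = 0) (h1 : ∀ x, x ≠ 0 → χ x = 1 ∨ χ x = -1)
    (hneg : ∀ x, χ (-x) = -χ x) (hsum : ∑ x, χ x = 0)
    (hconv : ∀ c, c ≠ 0 → ∑ x, χ x * χ (x + c) = -1)
    (n : ℕ) (q : ℕ) (hq : Fintype.card F = q) (hn : n = q * (q + 1))
    (hcard : Fintype.card (Option F × F) = n) :
    ∃ H : Matrix (Fin n) (Fin n) ℤ,
      (∀ i j, H i j = 1 ∨ H i j = -1) ∧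
      H.transpose = H ∧
      H * H.transpose = (n : ℤ) • 1 := by
  obtain ⟨hent, hsymm, hprod⟩ := generic h0 h1 hneg hsum hconv
  let e : (Option F × F) ≃ Fin n := Fintype.equivFinOfCardEq hcard
  refine ⟨Matrix.reindex e e (had χ), ?_, ?_, ?_⟩
  · intro i j
    rw [Matrix.reindex_apply, Matrix.submatrix_apply]
    exact hent _ _
  · rw [Matrix.transpose_reindex, hsymm]
  · rw [hsymm, hq] at hprod
    have hsc : ((q : ℤ) * ((q : ℤ) + 1)) = (n : ℤ) := by rw [hn]; push_cast; ring
    rw [Matrix.transpose_reindex, hsymm, Matrix.reindex_apply,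
      Matrix.submatrix_mul_equiv (had χ) (had χ) _ e.symm _, hprod, hsc]
    ext i j
    simp only [Matrix.submatrix_apply, Matrix.smul_apply, Matrix.one_apply,
      EmbeddingLike.apply_eq_iff_eq]

end SymHad

set_option maxRecDepth 8000 in
open SymHad in
/-- There exist symmetric Hadamard matrices of orders `756 = 27·28` and
`1892 = 43·44`. -/
theorem symmetric_hadamard_756_and_1892 :
    (∃ H : Matrix (Fin 756) (Fin 756) ℤ,
      (∀ i j, H i j = 1 ∨ H i j = -1) ∧
      H.transpose = H ∧
      H * H.transpose = (756 : ℤ) • 1) ∧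
    (∃ H : Matrix (Fin 1892) (Fin 1892) ℤ,
      (∀ i j, H i j = 1 ∨ H i j = -1) ∧
      H.transpose = H ∧
      H * H.transpose = (1892 : ℤ) • 1) := by
  constructor
  · exact build (χ := chi27) (by decide) (by decide) (by decide) (by decide) (by decide)
      756 27 (by simp) (by norm_num) (by simp)
  · exact build (χ := chi43) (by decide) (by decide) (by decide) (by decide)
      (by set_option maxHeartbeats 1000000 in decide)
      1892 43 (by simp) (by norm_num) (by simp)
end
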